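/- arXiv:2108.12543 — 5 statements merged into one kernel-verified Lean document; each statement's English description precedes it below -/
import Mathlib

section
/- ∫_0^1 ((1/2)(arsinh x)^2 · arccos x)/x dx = (3π/64)·ζ(3). -/
open Real MeasureTheory

noncomputable def dd (n : ℕ) : ℝ :=
  (-1)^n * 4^n * (Nat.factorial n : ℝ)^2 / (Nat.factorial (2*n+1) : ℝ)

lemma dd_zero : dd 0 = 1 := by simp [dd]

lemma dd_succ (n : ℕ) : dd (n+1) = -((2*(n:ℝ)+2)/(2*(n:ℝ)+3)) * dd n := by
  have h1 : 2*(n+1)+1 = (2*n+1) + 2 := by ring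
  have h2 : ((Nat.factorial ((2*n+1)+2)) : ℝ) = ((2*n+3) : ℕ) * (((2*n+2):ℕ) * (Nat.factorial (2*n+1) : ℝ)) := by
    rw [show (2*n+1)+2 = ((2*n+2)+1) from rfl, Nat.factorial_succ, Nat.factorial_succ]
    push_cast; ring
  have h3 : ((Nat.factorial (n+1)) : ℝ) = ((n+1 : ℕ) : ℝ) * (Nat.factorial n : ℝ) := by
    rw [Nat.factorial_succ]; push_cast; ring
  have hf : ((Nat.factorial (2*n+1)):ℝ) ≠ 0 := by positivity
  rw [dd, dd, h1, h2, h3]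
  push_cast
  have c3 : (2*(n:ℝ)+3) ≠ 0 := by positivity
  field_simp
  ring

lemma dd_abs (n : ℕ) : |dd n| ≤ 1 := by
  induction n with
  | zero => simp [dd_zero]
  | succ n ih =>
    rw [dd_succ, abs_mul, abs_neg, abs_div]
    have h2 : |2*(n:ℝ)+2| = 2*(n:ℝ)+2 := abs_of_pos (by positivity)
    have h3 : |2*(n:ℝ)+3| = 2*(n:ℝ)+3 := abs_of_pos (by positivity)
    rw [h2, h3]
    have : (2*(n:ℝ)+2)/(2*(n:ℝ)+3) ≤ 1 := by
      rw [div_le_one (by positivity)]; linarith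
    calc (2*(n:ℝ)+2)/(2*(n:ℝ)+3) * |dd n| ≤ 1 * 1 := by
          apply mul_le_mul this ih (abs_nonneg _) (by norm_num)
      _ = 1 := by norm_num

noncomputable def HH (y : ℝ) : ℝ := ∑' n : ℕ, dd n * y^(2*n+1)

noncomputable def FF (y : ℝ) : ℝ := ∑' n : ℕ, dd n / (2*(n:ℝ)+2) * y^(2*n+2)



lemma summable_aux {ρ : ℝ} (h0 : 0 ≤ ρ) (h : ρ < 1) :
    Summable (fun n : ℕ => (2*(n:ℝ)+1) * ρ^n) := by
  have h1 : Summable (fun n : ℕ => 2*((n:ℝ)^1 * ρ^n) + ρ^n) := by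
    refine Summable.add (Summable.mul_left 2 ?_) ?_
    · exact summable_pow_mul_geometric_of_norm_lt_one 1 (by rwa [norm_of_nonneg h0])
    · exact summable_geometric_of_lt_one h0 h
  refine h1.congr fun n => by ring

lemma summable_H {y : ℝ} (h : |y| < 1) : Summable (fun n : ℕ => dd n * y^(2*n+1)) := by
  have hg : Summable (fun n : ℕ => |y| * (|y|^2)^n) :=
    (summable_geometric_of_lt_one (by positivity) (by nlinarith [abs_nonneg y])).mul_left _
  refine Summable.of_norm_bounded hg fun n => ?_
  rw [Real.norm_eq_abs, abs_mul, abs_pow]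
  calc |dd n| * |y|^(2*n+1) ≤ 1 * |y|^(2*n+1) := by
        exact mul_le_mul_of_nonneg_right (dd_abs n) (by positivity)
    _ = |y| * (|y|^2)^n := by rw [one_mul, pow_succ, pow_mul]; ring

lemma summable_H' {y : ℝ} (h : |y| < 1) :
    Summable (fun n : ℕ => dd n * ((2*(n:ℝ)+1) * y^(2*n))) := by
  have hg : Summable (fun n : ℕ => (2*(n:ℝ)+1) * (|y|^2)^n) :=
    summable_aux (by positivity) (by nlinarith [abs_nonneg y])
  refine Summable.of_norm_bounded hg fun n => ?_
  rw [norm_mul, norm_mul, norm_pow]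
  simp only [Real.norm_eq_abs]
  have h1 : |(2*(n:ℝ)+1)| = 2*(n:ℝ)+1 := abs_of_nonneg (by positivity)
  rw [h1]
  calc |dd n| * ((2*(n:ℝ)+1) * |y|^(2*n)) ≤ 1 * ((2*(n:ℝ)+1) * |y|^(2*n)) :=
        mul_le_mul_of_nonneg_right (dd_abs n) (by positivity)
    _ = (2*(n:ℝ)+1) * (|y|^2)^n := by rw [one_mul, pow_mul]

lemma hasDerivAt_HH {x : ℝ} (hx : |x| < 1) :
    HasDerivAt HH (∑' n : ℕ, dd n * ((2*(n:ℝ)+1) * x^(2*n))) x := by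
  unfold HH
  set r : ℝ := (|x|+1)/2 with hr
  have hxr : |x| < r := by rw [hr]; linarith
  have hr1 : r < 1 := by rw [hr]; linarith
  have hr0 : 0 < r := by rw [hr]; positivity
  have hu : Summable (fun n : ℕ => (2*(n:ℝ)+1) * (r^2)^n) :=
    summable_aux (by positivity) (by nlinarith)
  have hderiv : ∀ (n : ℕ) (y : ℝ), y ∈ Set.Ioo (-r) r →
      HasDerivAt (fun z : ℝ => dd n * z^(2*n+1)) (dd n * ((2*(n:ℝ)+1) * y^(2*n))) y := by
    intro n y _
    have := (hasDerivAt_pow (2*n+1) y).const_mul (dd n)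
    simpa using this
  have hbound : ∀ (n : ℕ) (y : ℝ), y ∈ Set.Ioo (-r) r →
      ‖dd n * ((2*(n:ℝ)+1) * y^(2*n))‖ ≤ (2*(n:ℝ)+1) * (r^2)^n := by
    intro n y hy
    have hyr : |y| ≤ r := by
      rw [abs_le]; exact ⟨le_of_lt hy.1, le_of_lt hy.2⟩
    rw [Real.norm_eq_abs, abs_mul, abs_mul, abs_pow]
    have h1 : |(2*(n:ℝ)+1)| = 2*(n:ℝ)+1 := abs_of_nonneg (by positivity)
    rw [h1]
    calc |dd n| * ((2*(n:ℝ)+1) * |y|^(2*n)) ≤ 1 * ((2*(n:ℝ)+1) * r^(2*n)) := by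
          apply mul_le_mul (dd_abs n) ?_ (by positivity) (by norm_num)
          exact mul_le_mul_of_nonneg_left
            (pow_le_pow_left₀ (abs_nonneg y) hyr _) (by positivity)
      _ = (2*(n:ℝ)+1) * (r^2)^n := by rw [one_mul, pow_mul]
  have h0mem : (0:ℝ) ∈ Set.Ioo (-r) r := Set.mem_Ioo.2 ⟨by linarith, hr0⟩
  have hsum0 : Summable (fun n : ℕ => dd n * (0:ℝ)^(2*n+1)) := by
    refine (summable_zero).congr fun n => ?_
    simp
  have hxmem : x ∈ Set.Ioo (-r) r := by
    rcases abs_lt.1 hxr with ⟨h1, h2⟩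
    exact Set.mem_Ioo.2 ⟨h1, h2⟩
  exact hasDerivAt_tsum_of_isPreconnected (𝕜 := ℝ) (F := ℝ)
    (g := fun n y => dd n * y^(2*n+1)) (g' := fun n y => dd n * ((2*(n:ℝ)+1) * y^(2*n)))
    hu isOpen_Ioo isPreconnected_Ioo hderiv hbound h0mem hsum0 hxmem

lemma HH_ode {x : ℝ} (hx : |x| < 1) :
    (1+x^2) * (∑' n : ℕ, dd n * ((2*(n:ℝ)+1) * x^(2*n))) + x * HH x = 1 := by
  have sA : Summable (fun n : ℕ => dd n * ((2*(n:ℝ)+1) * x^(2*n))) := summable_H' hx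
  have sH : Summable (fun n : ℕ => dd n * x^(2*n+1)) := summable_H hx
  have sA1 : Summable (fun n : ℕ => dd (n+1) * ((2*((n+1:ℕ):ℝ)+1) * x^(2*(n+1)))) :=
    (summable_nat_add_iff 1).2 sA
  have sB : Summable (fun n : ℕ => x^2 * (dd n * ((2*(n:ℝ)+1) * x^(2*n)))) := sA.mul_left _
  have sC : Summable (fun n : ℕ => x * (dd n * x^(2*n+1))) := sH.mul_left _
  have key : ∀ n : ℕ, dd (n+1) * ((2*((n+1:ℕ):ℝ)+1) * x^(2*(n+1)))
      + (x^2 * (dd n * ((2*(n:ℝ)+1) * x^(2*n))) + x * (dd n * x^(2*n+1))) = 0 := by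
    intro n
    have h3 : (2*(n:ℝ)+3) ≠ 0 := by positivity
    rw [dd_succ]
    push_cast
    field_simp
    ring
  have hsplit : (∑' n : ℕ, dd n * ((2*(n:ℝ)+1) * x^(2*n)))
      = dd 0 * ((2*((0:ℕ):ℝ)+1) * x^(2*0))
        + ∑' n : ℕ, dd (n+1) * ((2*((n+1:ℕ):ℝ)+1) * x^(2*(n+1))) := by
    exact Summable.tsum_eq_zero_add sA
  have hB : x^2 * (∑' n : ℕ, dd n * ((2*(n:ℝ)+1) * x^(2*n)))
      = ∑' n : ℕ, x^2 * (dd n * ((2*(n:ℝ)+1) * x^(2*n))) := tsum_mul_left.symm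
  have hC : x * HH x = ∑' n : ℕ, x * (dd n * x^(2*n+1)) := by
    rw [HH]; exact tsum_mul_left.symm
  have hzero : (∑' n : ℕ, dd (n+1) * ((2*((n+1:ℕ):ℝ)+1) * x^(2*(n+1))))
      + ∑' n : ℕ, (x^2 * (dd n * ((2*(n:ℝ)+1) * x^(2*n))) + x * (dd n * x^(2*n+1))) = 0 := by
    rw [← Summable.tsum_add sA1 (sB.add sC)]
    simp only [key]
    exact tsum_zero
  have hBC : (∑' n : ℕ, x^2 * (dd n * ((2*(n:ℝ)+1) * x^(2*n))))
      + ∑' n : ℕ, x * (dd n * x^(2*n+1))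
      = ∑' n : ℕ, (x^2 * (dd n * ((2*(n:ℝ)+1) * x^(2*n))) + x * (dd n * x^(2*n+1))) :=
    (Summable.tsum_add sB sC).symm
  have h0 : dd 0 * ((2*((0:ℕ):ℝ)+1) * x^(2*0)) = 1 := by
    rw [dd_zero]; norm_num
  calc (1+x^2) * (∑' n : ℕ, dd n * ((2*(n:ℝ)+1) * x^(2*n))) + x * HH x
      = (∑' n : ℕ, dd n * ((2*(n:ℝ)+1) * x^(2*n)))
        + (x^2 * (∑' n : ℕ, dd n * ((2*(n:ℝ)+1) * x^(2*n))) + x * HH x) := by ring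
    _ = dd 0 * ((2*((0:ℕ):ℝ)+1) * x^(2*0))
        + ((∑' n : ℕ, dd (n+1) * ((2*((n+1:ℕ):ℝ)+1) * x^(2*(n+1))))
          + ((∑' n : ℕ, x^2 * (dd n * ((2*(n:ℝ)+1) * x^(2*n))))
            + ∑' n : ℕ, x * (dd n * x^(2*n+1)))) := by
        rw [hB, hC, hsplit]; ring
    _ = 1 := by rw [hBC, hzero, h0, add_zero]

lemma HH_zero : HH 0 = 0 := by
  unfold HH
  have : ∀ n : ℕ, dd n * (0:ℝ)^(2*n+1) = 0 := fun n => by simp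
  rw [tsum_congr this, tsum_zero]

lemma hasDerivAt_K {y : ℝ} (hy : |y| < 1) :
    HasDerivAt (fun z => Real.sqrt (1+z^2) * HH z - Real.arsinh z) 0 y := by
  set s := Real.sqrt (1+y^2) with hs
  have hs2 : s^2 = 1+y^2 := Real.sq_sqrt (by positivity)
  have hs0 : 0 < s := Real.sqrt_pos.2 (by positivity)
  have hsq : HasDerivAt (fun z : ℝ => Real.sqrt (1+z^2)) (y/s) y := by
    have hpoly : HasDerivAt (fun z : ℝ => 1+z^2) (2*y) y := by
      have := (hasDerivAt_pow 2 y).const_add 1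
      simpa using this
    have := hpoly.sqrt (by positivity)
    convert this using 1
    rw [← hs]
    field_simp
  have hH := hasDerivAt_HH hy
  have hprod := hsq.mul hH
  have harsinh := Real.hasDerivAt_arsinh y
  have hsub := hprod.sub harsinh
  refine hsub.congr_deriv ?_
  have hode := HH_ode hy
  have : y/s * HH y + s * (∑' n : ℕ, dd n * ((2*(n:ℝ)+1) * y^(2*n))) - (Real.sqrt (1+y^2))⁻¹
      = (y * HH y + (1+y^2) * (∑' n : ℕ, dd n * ((2*(n:ℝ)+1) * y^(2*n))) - 1)/s := by
    rw [← hs, ← hs2]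
    field_simp
  rw [this]
  rw [show y * HH y + (1+y^2) * (∑' n : ℕ, dd n * ((2*(n:ℝ)+1) * y^(2*n))) - 1 = 0 by
    linarith [hode]]
  simp

lemma sqrt_mul_HH {x : ℝ} (h0 : 0 ≤ x) (h1 : x < 1) :
    Real.sqrt (1+x^2) * HH x = Real.arsinh x := by
  have habs : ∀ y ∈ Set.Icc (0:ℝ) x, |y| < 1 := by
    intro y hy
    rw [abs_lt]
    constructor <;> [linarith [hy.1]; linarith [hy.2]]
  have hcont : ContinuousOn (fun z => Real.sqrt (1+z^2) * HH z - Real.arsinh z)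
      (Set.Icc 0 x) := fun y hy =>
    ((hasDerivAt_K (habs y hy)).continuousAt).continuousWithinAt
  have hderiv : ∀ y ∈ Set.Ico (0:ℝ) x,
      HasDerivWithinAt (fun z => Real.sqrt (1+z^2) * HH z - Real.arsinh z) 0 (Set.Ici y) y := by
    intro y hy
    exact (hasDerivAt_K (habs y ⟨hy.1, le_of_lt hy.2⟩)).hasDerivWithinAt
  have := constant_of_has_deriv_right_zero hcont hderiv x (Set.right_mem_Icc.2 h0)
  simp only [HH_zero, Real.arsinh_zero, mul_zero, sub_zero] at this
  linarith [this]

lemma hasDerivAt_FF {x : ℝ} (hx : |x| < 1) : HasDerivAt FF (HH x) x := by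
  unfold FF HH
  set r : ℝ := (|x|+1)/2 with hr
  have hxr : |x| < r := by rw [hr]; linarith
  have hr1 : r < 1 := by rw [hr]; linarith
  have hr0 : 0 < r := by rw [hr]; positivity
  have hu : Summable (fun n : ℕ => r * (r^2)^n) :=
    (summable_geometric_of_lt_one (by positivity) (by nlinarith)).mul_left r
  have hderiv : ∀ (n : ℕ) (y : ℝ), y ∈ Set.Ioo (-r) r →
      HasDerivAt (fun z : ℝ => dd n / (2*(n:ℝ)+2) * z^(2*n+2)) (dd n * y^(2*n+1)) y := by
    intro n y _
    have h2 : (2*(n:ℝ)+2) ≠ 0 := by positivity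
    have := (hasDerivAt_pow (2*n+2) y).const_mul (dd n / (2*(n:ℝ)+2))
    refine this.congr_deriv ?_
    push_cast
    field_simp
  have hbound : ∀ (n : ℕ) (y : ℝ), y ∈ Set.Ioo (-r) r →
      ‖dd n * y^(2*n+1)‖ ≤ r * (r^2)^n := by
    intro n y hy
    have hyr : |y| ≤ r := by rw [abs_le]; exact ⟨le_of_lt hy.1, le_of_lt hy.2⟩
    rw [Real.norm_eq_abs, abs_mul, abs_pow]
    calc |dd n| * |y|^(2*n+1) ≤ 1 * r^(2*n+1) := by
          apply mul_le_mul (dd_abs n) (pow_le_pow_left₀ (abs_nonneg y) hyr _)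
            (by positivity) (by norm_num)
      _ = r * (r^2)^n := by rw [one_mul, pow_succ, pow_mul]; ring
  have h0mem : (0:ℝ) ∈ Set.Ioo (-r) r := Set.mem_Ioo.2 ⟨by linarith, hr0⟩
  have hsum0 : Summable (fun n : ℕ => dd n / (2*(n:ℝ)+2) * (0:ℝ)^(2*n+2)) := by
    refine (summable_zero).congr fun n => ?_
    simp
  have hxmem : x ∈ Set.Ioo (-r) r := by
    rcases abs_lt.1 hxr with ⟨ha, hb⟩
    exact Set.mem_Ioo.2 ⟨ha, hb⟩
  exact hasDerivAt_tsum_of_isPreconnected (𝕜 := ℝ) (F := ℝ)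
    (g := fun n y => dd n / (2*(n:ℝ)+2) * y^(2*n+2)) (g' := fun n y => dd n * y^(2*n+1))
    hu isOpen_Ioo isPreconnected_Ioo hderiv hbound h0mem hsum0 hxmem

lemma FF_zero : FF 0 = 0 := by
  unfold FF
  have : ∀ n : ℕ, dd n / (2*(n:ℝ)+2) * (0:ℝ)^(2*n+2) = 0 := fun n => by simp
  rw [tsum_congr this, tsum_zero]

lemma FF_eq {x : ℝ} (h0 : 0 ≤ x) (h1 : x < 1) : FF x = 1/2 * (Real.arsinh x)^2 := by
  have habs : ∀ y ∈ Set.Icc (0:ℝ) x, |y| < 1 := by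
    intro y hy
    rw [abs_lt]
    constructor <;> [linarith [hy.1]; linarith [hy.2]]
  have hderivL : ∀ y : ℝ, 0 ≤ y → y < 1 →
      HasDerivAt (fun z => FF z - 1/2 * (Real.arsinh z)^2) 0 y := by
    intro y hy0 hy1
    have hy : |y| < 1 := by rw [abs_lt]; constructor <;> linarith
    have hF := hasDerivAt_FF hy
    have harsinh : HasDerivAt (fun z => 1/2 * (Real.arsinh z)^2)
        (1/2 * (2 * Real.arsinh y ^ 1 * (Real.sqrt (1+y^2))⁻¹)) y :=
      ((Real.hasDerivAt_arsinh y).pow 2).const_mul (1/2)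
    have hsub := hF.sub harsinh
    refine hsub.congr_deriv ?_
    have hs0 : (0:ℝ) < Real.sqrt (1+y^2) := Real.sqrt_pos.2 (by positivity)
    have hkey := sqrt_mul_HH hy0 hy1
    rw [pow_one]
    have : Real.arsinh y * (Real.sqrt (1+y^2))⁻¹ = HH y := by
      rw [← hkey]; field_simp
    nlinarith [this]
  have hcont : ContinuousOn (fun z => FF z - 1/2 * (Real.arsinh z)^2) (Set.Icc 0 x) :=
    fun y hy => ((hderivL y hy.1 (lt_of_le_of_lt hy.2 h1)).continuousAt).continuousWithinAt
  have hderiv : ∀ y ∈ Set.Ico (0:ℝ) x,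
      HasDerivWithinAt (fun z => FF z - 1/2 * (Real.arsinh z)^2) 0 (Set.Ici y) y :=
    fun y hy => (hderivL y hy.1 (lt_trans hy.2 h1)).hasDerivWithinAt
  have := constant_of_has_deriv_right_zero hcont hderiv x (Set.right_mem_Icc.2 h0)
  simp only [FF_zero, Real.arsinh_zero] at this
  norm_num at this
  linarith [this]

lemma W_val (k : ℕ) : ∫ x in (0:ℝ)..(π/2), Real.cos x ^ (2*k) =
    π/2 * (Nat.factorial (2*k) : ℝ) / (4^k * (Nat.factorial k : ℝ)^2) := by
  induction k with
  | zero => simp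
  | succ k ih =>
    have h : 2*(k+1) = (2*k) + 2 := by ring
    rw [h, integral_cos_pow, ih]
    rw [Real.cos_pi_div_two, Real.sin_zero, Real.cos_zero]
    have hf1 : (Nat.factorial (2*k+2) : ℝ) = (2*(k:ℝ)+2) * ((2*(k:ℝ)+1) * (Nat.factorial (2*k) : ℝ)) := by
      rw [show 2*k+2 = (2*k+1)+1 from rfl, Nat.factorial_succ, Nat.factorial_succ]
      push_cast; ring
    have hf2 : (Nat.factorial (k+1) : ℝ) = ((k:ℝ)+1) * (Nat.factorial k : ℝ) := by
      rw [Nat.factorial_succ]; push_cast; ring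
    rw [hf1, hf2]
    have h1 : ((k:ℝ)+1) ≠ 0 := by positivity
    have h2 : (Nat.factorial k : ℝ) ≠ 0 := by positivity
    have h3 : (4:ℝ)^k ≠ 0 := by positivity
    have h4 : (2*(k:ℝ)+2) ≠ 0 := by positivity
    push_cast
    field_simp
    ring

lemma J_sub (n : ℕ) : ∫ x in (0:ℝ)..1, x^(2*n+1) * Real.arccos x =
    (∫ x in (0:ℝ)..(π/2), Real.cos x^(2*n+2)) / (2*(n:ℝ)+2) := by
  have hg : Continuous (fun x : ℝ => x^(2*n+1) * Real.arccos x) :=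
    (continuous_pow _).mul Real.continuous_arccos
  have hsub : (∫ x in (π/2)..(0:ℝ),
        ((fun x : ℝ => x^(2*n+1) * Real.arccos x) ∘ Real.cos) x * (-Real.sin x))
      = ∫ x in (0:ℝ)..1, x^(2*n+1) * Real.arccos x := by
    rw [intervalIntegral.integral_comp_mul_deriv
      (fun x _ => Real.hasDerivAt_cos x) (continuous_sin.neg).continuousOn hg]
    rw [Real.cos_pi_div_two, Real.cos_zero]
  rw [← hsub, intervalIntegral.integral_symm]
  have hcongr : ∫ x in (0:ℝ)..(π/2),
        ((fun x : ℝ => x^(2*n+1) * Real.arccos x) ∘ Real.cos) x * (-Real.sin x)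
      = ∫ x in (0:ℝ)..(π/2), -(x * ((Real.cos x)^(2*n+1) * Real.sin x)) := by
    apply intervalIntegral.integral_congr
    intro x hx
    rw [Set.uIcc_of_le (by positivity : (0:ℝ) ≤ π/2)] at hx
    have harc : Real.arccos (Real.cos x) = x :=
      Real.arccos_cos hx.1 (le_trans hx.2 (by linarith [Real.pi_pos]))
    simp only [Function.comp]
    rw [harc]
    ring
  rw [hcongr, intervalIntegral.integral_neg, neg_neg]
  -- integration by parts
  have h2 : (2*(n:ℝ)+2) ≠ 0 := by positivity
  have hv : ∀ x ∈ Set.uIcc (0:ℝ) (π/2),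
      HasDerivAt (fun x => (-(1:ℝ)/(2*(n:ℝ)+2)) * (Real.cos x)^(2*n+2))
        ((Real.cos x)^(2*n+1) * Real.sin x) x := by
    intro x _
    have := ((Real.hasDerivAt_cos x).pow (2*n+2)).const_mul (-(1:ℝ)/(2*(n:ℝ)+2))
    refine this.congr_deriv ?_
    push_cast
    field_simp
  have hu : ∀ x ∈ Set.uIcc (0:ℝ) (π/2), HasDerivAt (fun x : ℝ => x) 1 x :=
    fun x _ => hasDerivAt_id x
  have hu' : IntervalIntegrable (fun _ : ℝ => (1:ℝ)) MeasureTheory.volume 0 (π/2) :=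
    intervalIntegrable_const
  have hv' : IntervalIntegrable (fun x => (Real.cos x)^(2*n+1) * Real.sin x)
      MeasureTheory.volume 0 (π/2) :=
    (((Real.continuous_cos).pow _).mul Real.continuous_sin).intervalIntegrable _ _
  have hibp := intervalIntegral.integral_mul_deriv_eq_deriv_mul hu hv hu' hv'
  rw [hibp]
  rw [Real.cos_pi_div_two, Real.cos_zero]
  have hz : ((0:ℝ))^(2*n+2) = 0 := zero_pow (by omega)
  rw [hz]
  rw [intervalIntegral.integral_const_mul]
  field_simp
  simp only [intervalIntegral.integral_neg, intervalIntegral.integral_div, zero_mul, zero_sub]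
  field_simp

lemma term_val (n : ℕ) :
    dd n/(2*(n:ℝ)+2) * ∫ x in (0:ℝ)..1, x^(2*n+1) * Real.arccos x =
      (-1)^n * π/(16*((n:ℝ)+1)^3) := by
  rw [J_sub, show 2*n+2 = 2*(n+1) from by ring, W_val]
  rw [dd]
  have hf1 : (Nat.factorial (2*(n+1)) : ℝ) = (2*(n:ℝ)+2) * ((Nat.factorial (2*n+1) : ℝ)) := by
    rw [show 2*(n+1) = (2*n+1)+1 from by ring, Nat.factorial_succ]
    push_cast; ring
  have hf2 : (Nat.factorial (n+1) : ℝ) = ((n:ℝ)+1) * (Nat.factorial n : ℝ) := by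
    rw [Nat.factorial_succ]; push_cast; ring
  rw [hf1, hf2]
  have h1 : ((n:ℝ)+1) ≠ 0 := by positivity
  have h2 : (Nat.factorial n : ℝ) ≠ 0 := by positivity
  have h3 : (4:ℝ)^n ≠ 0 := by positivity
  have h4 : (2*(n:ℝ)+2) ≠ 0 := by positivity
  have h5 : (Nat.factorial (2*n+1) : ℝ) ≠ 0 := by positivity
  push_cast
  field_simp
  ring

lemma J_nonneg (n : ℕ) : 0 ≤ ∫ x in (0:ℝ)..1, x^(2*n+1) * Real.arccos x := by
  apply intervalIntegral.integral_nonneg (by norm_num)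
  intro x hx
  exact mul_nonneg (pow_nonneg hx.1 _) (Real.arccos_nonneg x)

lemma sum_alt : ∑' n : ℕ, ((-1)^n * π/(16*((n:ℝ)+1)^3)) =
    (3 * π / 64) * ∑' n : ℕ, 1/((n:ℝ)+1)^3 := by
  have hS : Summable (fun n : ℕ => 1/((n:ℝ)+1)^3) := by
    have := Real.summable_one_div_nat_pow.2 (show 2 ≤ 3 by norm_num)
    have h := (summable_nat_add_iff 1).2 this
    refine h.congr fun n => ?_
    push_cast
    ring
  set S := ∑' n : ℕ, 1/((n:ℝ)+1)^3 with hSdef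
  have hg : Summable (fun n : ℕ => (-1)^n/((n:ℝ)+1)^3) := by
    refine Summable.of_norm_bounded hS fun n => ?_
    rw [Real.norm_eq_abs, abs_div, abs_pow, abs_neg, abs_one, one_pow]
    rw [abs_of_nonneg (by positivity : (0:ℝ) ≤ ((n:ℝ)+1)^3)]
  have hinj2 : Function.Injective (fun k : ℕ => 2*k) := fun a b h => by simp only [] at h; omega
  have hinj21 : Function.Injective (fun k : ℕ => 2*k+1) := fun a b h => by simp only [] at h; omega
  -- even/odd split for f n = 1/(n+1)^3
  have hfe : Summable (fun k : ℕ => 1/(((2*k:ℕ):ℝ)+1)^3) := by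
    have := hS.comp_injective hinj2
    refine this.congr fun k => ?_
    simp [Function.comp]
  have hfo : Summable (fun k : ℕ => 1/(((2*k+1:ℕ):ℝ)+1)^3) := by
    have := hS.comp_injective hinj21
    refine this.congr fun k => ?_
    simp [Function.comp]
  have hodd_val : ∑' k : ℕ, 1/(((2*k+1:ℕ):ℝ)+1)^3 = S/8 := by
    have : ∀ k : ℕ, 1/(((2*k+1:ℕ):ℝ)+1)^3 = (1/8) * (1/((k:ℝ)+1)^3) := by
      intro k
      have hk : ((k:ℝ)+1) ≠ 0 := by positivity
      push_cast
      field_simp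
      ring
    rw [tsum_congr this, tsum_mul_left]
    ring
  have hsplit : (∑' k : ℕ, 1/(((2*k:ℕ):ℝ)+1)^3) + ∑' k : ℕ, 1/(((2*k+1:ℕ):ℝ)+1)^3 = S := by
    exact tsum_even_add_odd (f := fun n : ℕ => 1/((n:ℝ)+1)^3) hfe hfo
  have heven_val : ∑' k : ℕ, 1/(((2*k:ℕ):ℝ)+1)^3 = S - S/8 := by
    linarith [hsplit, hodd_val]
  -- even/odd split for g
  have hge : Summable (fun k : ℕ => (-1)^(2*k:ℕ)/(((2*k:ℕ):ℝ)+1)^3) := by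
    have := hg.comp_injective hinj2
    exact this.congr fun k => by simp [Function.comp]
  have hgo : Summable (fun k : ℕ => (-1)^(2*k+1:ℕ)/(((2*k+1:ℕ):ℝ)+1)^3) := by
    have := hg.comp_injective hinj21
    exact this.congr fun k => by simp [Function.comp]
  have hgsplit : (∑' k : ℕ, (-1)^(2*k:ℕ)/(((2*k:ℕ):ℝ)+1)^3)
      + ∑' k : ℕ, (-1)^(2*k+1:ℕ)/(((2*k+1:ℕ):ℝ)+1)^3
      = ∑' n : ℕ, (-1)^n/((n:ℝ)+1)^3 :=
    tsum_even_add_odd (f := fun n : ℕ => (-1)^n/((n:ℝ)+1)^3) hge hgo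
  have hge_val : ∑' k : ℕ, (-1)^(2*k:ℕ)/(((2*k:ℕ):ℝ)+1)^3 = S - S/8 := by
    rw [← heven_val]
    apply tsum_congr
    intro k
    rw [pow_mul]
    norm_num
  have hgo_val : ∑' k : ℕ, (-1)^(2*k+1:ℕ)/(((2*k+1:ℕ):ℝ)+1)^3 = -(S/8) := by
    rw [← hodd_val, ← tsum_neg]
    apply tsum_congr
    intro k
    rw [pow_succ, pow_mul]
    norm_num
    rw [neg_div, one_div]
  have hgval : ∑' n : ℕ, (-1)^n/((n:ℝ)+1)^3 = (3/4) * S := by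
    rw [← hgsplit, hge_val, hgo_val]; ring
  have : ∀ n : ℕ, (-1)^n * π/(16*((n:ℝ)+1)^3) = (π/16) * ((-1)^n/((n:ℝ)+1)^3) := by
    intro n
    have : ((n:ℝ)+1) ≠ 0 := by positivity
    field_simp
  rw [tsum_congr this, tsum_mul_left, hgval]
  ring

theorem integral_arsinh_sq_arccos :
    ∫ x in (0:ℝ)..1, (1 / 2) * (Real.arsinh x) ^ 2 * Real.arccos x / x =
      (3 * Real.pi / 64) * ∑' n : ℕ, 1 / ((n + 1 : ℕ) : ℝ) ^ 3 := by
  set Fn : ℕ → ℝ → ℝ := fun n x => dd n/(2*(n:ℝ)+2) * x^(2*n+1) * Real.arccos x with hFn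
  have hScube : Summable (fun n : ℕ => 1/((n:ℝ)+1)^3) := by
    have := Real.summable_one_div_nat_pow.2 (show 2 ≤ 3 by norm_num)
    have h := (summable_nat_add_iff 1).2 this
    refine h.congr fun n => ?_
    push_cast
    ring
  have hFcont : ∀ n, Continuous (Fn n) := fun n =>
    (continuous_const.mul (continuous_pow _)).mul Real.continuous_arccos
  have hFint : ∀ n : ℕ, Integrable (Fn n) (volume.restrict (Set.Ioc (0:ℝ) 1)) :=
    fun n => (hFcont n).integrableOn_Ioc
  -- value of each integral
  have hval : ∀ n : ℕ, (∫ x in Set.Ioc (0:ℝ) 1, Fn n x) = (-1)^n * π/(16*((n:ℝ)+1)^3) := by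
    intro n
    rw [← intervalIntegral.integral_of_le (by norm_num : (0:ℝ) ≤ 1), ← term_val n]
    rw [show Fn n = fun x => dd n/(2*(n:ℝ)+2) * (x^(2*n+1) * Real.arccos x) from
      funext fun x => by rw [hFn]; ring]
    rw [intervalIntegral.integral_const_mul]
  -- norms
  have hnorm : ∀ n : ℕ, (∫ x in Set.Ioc (0:ℝ) 1, ‖Fn n x‖) = π/(16*((n:ℝ)+1)^3) := by
    intro n
    have heq : Set.EqOn (fun x => ‖Fn n x‖)
        (fun x => |dd n/(2*(n:ℝ)+2)| * (x^(2*n+1) * Real.arccos x)) (Set.Ioc 0 1) := by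
      intro x hx
      simp only [hFn, Real.norm_eq_abs]
      rw [abs_mul, abs_mul, abs_of_nonneg (pow_nonneg (le_of_lt hx.1) _),
        abs_of_nonneg (Real.arccos_nonneg x)]
      ring
    rw [setIntegral_congr_fun measurableSet_Ioc heq, integral_const_mul,
      ← intervalIntegral.integral_of_le (by norm_num : (0:ℝ) ≤ 1)]
    have h1 : |dd n/(2*(n:ℝ)+2)| * ∫ x in (0:ℝ)..1, x^(2*n+1) * Real.arccos x
        = |dd n/(2*(n:ℝ)+2) * ∫ x in (0:ℝ)..1, x^(2*n+1) * Real.arccos x| := by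
      rw [abs_mul, abs_of_nonneg (J_nonneg n)]
    rw [h1, term_val n, abs_div, abs_mul, abs_pow, abs_neg, abs_one, one_pow, one_mul,
      abs_of_nonneg Real.pi_nonneg, abs_of_nonneg (by positivity : (0:ℝ) ≤ 16*((n:ℝ)+1)^3)]
  have hsumnorm : Summable (fun n : ℕ => ∫ x in Set.Ioc (0:ℝ) 1, ‖Fn n x‖) := by
    refine ((hScube.mul_left (π/16)).congr fun n => ?_)
    rw [hnorm n]
    field_simp
  -- interchange
  have hkey := MeasureTheory.integral_tsum_of_summable_integral_norm hFint hsumnorm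
  -- identify the tsum integrand a.e.
  have hne : ∀ᵐ (x:ℝ) ∂volume, x ≠ 1 := by
    rw [MeasureTheory.ae_iff]
    have : {x : ℝ | ¬ x ≠ 1} = {1} := by ext x; simp
    rw [this]
    exact Real.volume_singleton
  have hae : (fun x => ∑' n, Fn n x)
      =ᵐ[volume.restrict (Set.Ioc (0:ℝ) 1)]
      (fun x => (1 / 2) * (Real.arsinh x) ^ 2 * Real.arccos x / x) := by
    filter_upwards [ae_restrict_mem measurableSet_Ioc, ae_restrict_of_ae hne] with x hx hx1
    have hx0 : 0 < x := hx.1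
    have hxlt : x < 1 := lt_of_le_of_ne hx.2 hx1
    have hterm : ∀ n : ℕ, Fn n x
        = (dd n/(2*(n:ℝ)+2) * x^(2*n+2)) * (Real.arccos x / x) := by
      intro n
      simp only [hFn]
      rw [pow_succ]
      field_simp
      ring
    rw [tsum_congr hterm, tsum_mul_right]
    rw [show (∑' n : ℕ, dd n/(2*(n:ℝ)+2) * x^(2*n+2)) = FF x from rfl]
    rw [FF_eq (le_of_lt hx0) hxlt]
    ring
  rw [intervalIntegral.integral_of_le (by norm_num : (0:ℝ) ≤ 1)]
  rw [← integral_congr_ae hae, ← hkey]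
  rw [tsum_congr hval, sum_alt]
  congr 1
  refine tsum_congr fun n => ?_
  push_cast
  ring
end

section
/- For all real t with 0 < t ≤ 1, Li₂(t) ≥ (4/(3π)) · (arcsin t)^3 / t. -/
open Real

lemma basel' : HasSum (fun n : ℕ => (1:ℝ) / ((n + 1 : ℕ) : ℝ) ^ 2) (π ^ 2 / 6) := by
  have h2 := (hasSum_nat_add_iff' (f := fun n : ℕ => (1:ℝ) / (n : ℝ) ^ 2) 1).mpr hasSum_zeta_two
  simpa using h2

lemma summable_li2 {t : ℝ} (h0 : 0 ≤ t) (h1 : t ≤ 1) :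
    Summable (fun n : ℕ => t ^ (n + 1) / ((n + 1 : ℕ) : ℝ) ^ 2) := by
  refine Summable.of_nonneg_of_le (fun n => by positivity) (fun n => ?_) basel'.summable
  gcongr
  exact pow_le_one₀ h0 h1

-- tail bound
lemma tail_bound (N : ℕ) (hN : 1 ≤ N) :
    ∑' i : ℕ, (1:ℝ) / ((i + N + 1 : ℕ) : ℝ) ^ 2 ≤ 1 / N := by
  have hN1 : (1:ℝ) ≤ (N:ℝ) := by exact_mod_cast hN
  have hpos : ∀ i : ℕ, (0:ℝ) < (N:ℝ) + i := fun i => by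
    linarith [Nat.cast_nonneg (α := ℝ) i]
  have htel : HasSum (fun i : ℕ => (1:ℝ)/(N + i) - 1/(N + i + 1)) (1 / N) := by
    rw [hasSum_iff_tendsto_nat_of_nonneg]
    · have heq : ∀ n : ℕ, ∑ i ∈ Finset.range n, ((1:ℝ)/(N + i) - 1/(N + i + 1))
          = 1/N - 1/(N + n) := by
        intro n
        have := Finset.sum_range_sub' (f := fun i : ℕ => (1:ℝ)/(N + i)) n
        simpa [Nat.cast_add, Nat.cast_one, add_assoc] using this
      simp_rw [heq]
      have h0 : Filter.Tendsto (fun n : ℕ => (N:ℝ) + n) Filter.atTop Filter.atTop :=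
        Filter.tendsto_atTop_add_const_left _ _ tendsto_natCast_atTop_atTop
      have : Filter.Tendsto (fun n : ℕ => (1:ℝ)/(N + n)) Filter.atTop (nhds 0) := by
        simpa [one_div, Function.comp_def] using tendsto_inv_atTop_zero.comp h0
      simpa using (tendsto_const_nhds (x := (1:ℝ)/N)).sub this
    · intro i
      have h1 := hpos i
      have h2 : (0:ℝ) < (N:ℝ) + i + 1 := by linarith
      rw [sub_nonneg, div_le_div_iff₀ h2 h1]
      linarith
  refine le_of_le_of_eq (Summable.tsum_le_tsum (fun i => ?_) ?_ htel.summable) htel.tsum_eq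
  · have h1 := hpos i
    have h2 : (0:ℝ) < (N:ℝ) + i + 1 := by linarith
    have hc : ((i + N + 1 : ℕ) : ℝ) = (N:ℝ) + i + 1 := by push_cast; ring
    rw [hc, div_sub_div _ _ (ne_of_gt h1) (ne_of_gt h2)]
    rw [div_le_div_iff₀ (by positivity) (by positivity)]
    nlinarith
  · refine Summable.of_nonneg_of_le (fun n => by positivity) (fun n => ?_) basel'.summable
    have hle : ((n + 1 : ℕ):ℝ) ^ 2 ≤ ((n + N + 1 : ℕ):ℝ) ^ 2 := by
      have h : (n + 1 : ℕ) ≤ n + N + 1 := by omega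
      exact pow_le_pow_left₀ (by positivity) (by exact_mod_cast h) 2
    exact one_div_le_one_div_of_le (by positivity) hle

lemma deficiency {t : ℝ} (h0 : 0 ≤ t) (h1 : t ≤ 1) (N : ℕ) (hN : 1 ≤ N) :
    π ^ 2 / 6 - ∑' n : ℕ, t ^ (n + 1) / ((n + 1 : ℕ) : ℝ) ^ 2
      ≤ (1 - t) * (1 + Real.log N) + 1 / N := by
  have hf := summable_li2 h0 h1
  have hg := basel'.summable
  have hd : Summable (fun n : ℕ => (1 - t ^ (n + 1)) / ((n + 1 : ℕ) : ℝ) ^ 2) := by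
    exact (hg.sub hf).congr (fun n => by ring)
  have key : π ^ 2 / 6 - ∑' n : ℕ, t ^ (n + 1) / ((n + 1 : ℕ) : ℝ) ^ 2
      = ∑' n : ℕ, (1 - t ^ (n + 1)) / ((n + 1 : ℕ) : ℝ) ^ 2 := by
    rw [← basel'.tsum_eq, ← Summable.tsum_sub hg hf]
    congr 1 with n
    ring
  rw [key]
  rw [← hd.sum_add_tsum_nat_add N]
  have hfront : ∑ n ∈ Finset.range N, (1 - t ^ (n + 1)) / ((n + 1 : ℕ) : ℝ) ^ 2
      ≤ (1 - t) * (1 + Real.log N) := by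
    have hH : ∑ n ∈ Finset.range N, (1:ℝ) / ((n + 1 : ℕ) : ℝ) ≤ 1 + Real.log N := by
      have := harmonic_le_one_add_log N
      rw [harmonic] at this
      have hcast : ((∑ i ∈ Finset.range N, ((i:ℚ) + 1)⁻¹ : ℚ) : ℝ)
          = ∑ n ∈ Finset.range N, (1:ℝ) / ((n + 1 : ℕ) : ℝ) := by
        push_cast
        simp [one_div]
      rw [← hcast]
      exact_mod_cast by push_cast at this ⊢; linarith
    calc ∑ n ∈ Finset.range N, (1 - t ^ (n + 1)) / ((n + 1 : ℕ) : ℝ) ^ 2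
        ≤ ∑ n ∈ Finset.range N, (1 - t) * (1 / ((n + 1 : ℕ) : ℝ)) := by
          apply Finset.sum_le_sum
          intro n _
          have hb : 1 - t ^ (n + 1) ≤ ((n + 1 : ℕ) : ℝ) * (1 - t) := by
            have h2 := one_add_mul_le_pow (a := t - 1) (by linarith) (n + 1)
            simp only [show (1:ℝ) + (t - 1) = t from by ring] at h2
            push_cast
            push_cast at h2
            linarith
          calc (1 - t ^ (n + 1)) / ((n + 1 : ℕ) : ℝ) ^ 2
              ≤ (((n + 1 : ℕ) : ℝ) * (1 - t)) / ((n + 1 : ℕ) : ℝ) ^ 2 := by gcongr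
            _ = (1 - t) * (1 / ((n + 1 : ℕ) : ℝ)) := by
                have hp : ((n + 1 : ℕ) : ℝ) ≠ 0 := by positivity
                field_simp
      _ = (1 - t) * ∑ n ∈ Finset.range N, (1 / ((n + 1 : ℕ) : ℝ)) := by
          rw [Finset.mul_sum]
      _ ≤ (1 - t) * (1 + Real.log N) := by
          apply mul_le_mul_of_nonneg_left hH (by linarith)
  have htail : ∑' i : ℕ, (1 - t ^ (i + N + 1)) / ((i + N + 1 : ℕ) : ℝ) ^ 2 ≤ (1:ℝ) / N := by
    have hsum1 : Summable (fun i : ℕ => (1 - t ^ (i + N + 1)) / ((i + N + 1 : ℕ) : ℝ) ^ 2) := by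
      refine Summable.of_nonneg_of_le (fun n => ?_) (fun n => ?_) basel'.summable
      · exact div_nonneg (by nlinarith [pow_le_one₀ h0 h1 (n := n + N + 1)]) (by positivity)
      · have hnum : (1 - t ^ (n + N + 1)) ≤ 1 := by nlinarith [pow_nonneg h0 (n + N + 1)]
        have hle : ((n + 1 : ℕ):ℝ) ^ 2 ≤ ((n + N + 1 : ℕ):ℝ) ^ 2 := by
          have h : (n + 1 : ℕ) ≤ n + N + 1 := by omega
          exact pow_le_pow_left₀ (by positivity) (by exact_mod_cast h) 2
        calc (1 - t ^ (n + N + 1)) / ((n + N + 1 : ℕ) : ℝ) ^ 2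
            ≤ 1 / ((n + N + 1 : ℕ) : ℝ) ^ 2 := by gcongr
          _ ≤ 1 / ((n + 1 : ℕ) : ℝ) ^ 2 := one_div_le_one_div_of_le (by positivity) hle
    refine le_trans (Summable.tsum_le_tsum (fun i => ?_) hsum1 ?_)
      (tail_bound N hN)
    · gcongr
      nlinarith [pow_nonneg h0 (i + N + 1)]
    · refine Summable.of_nonneg_of_le (fun n => by positivity) (fun n => ?_) basel'.summable
      have hle : ((n + 1 : ℕ):ℝ) ^ 2 ≤ ((n + N + 1 : ℕ):ℝ) ^ 2 := by
        have h : (n + 1 : ℕ) ≤ n + N + 1 := by omega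
        exact pow_le_pow_left₀ (by positivity) (by exact_mod_cast h) 2
      exact one_div_le_one_div_of_le (by positivity) hle
  exact add_le_add hfront htail

lemma arcsin_le_linear {t : ℝ} (h0 : 0 ≤ t) (h1 : t ≤ 1) : arcsin t ≤ π / 2 * t := by
  have hπ := pi_pos
  have hx0 : 0 ≤ π / 2 * t := by positivity
  have hx1 : π / 2 * t ≤ π / 2 := by nlinarith
  have hs : t ≤ sin (π / 2 * t) := by
    have h := Real.mul_le_sin hx0 hx1
    have : 2 / π * (π / 2 * t) = t := by field_simp
    linarith [this ▸ h]
  calc arcsin t ≤ arcsin (sin (π / 2 * t)) := monotone_arcsin hs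
    _ = π / 2 * t := arcsin_sin (by linarith) hx1

lemma arcsin_le_sqrt_bound {t : ℝ} (h0 : 0 ≤ t) (h1 : t ≤ 1) :
    arcsin t ≤ π / 2 - Real.sqrt (2 * (1 - t)) := by
  have hπ := pi_gt_d6
  set u := Real.sqrt (2 * (1 - t)) with hu
  have hu0 : 0 ≤ u := Real.sqrt_nonneg _
  have hu2 : u ^ 2 = 2 * (1 - t) := Real.sq_sqrt (by linarith)
  have hu15 : u ≤ 1.5 := by nlinarith
  have hsin : t ≤ sin (π / 2 - u) := by
    rw [Real.sin_pi_div_two_sub]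
    have := Real.one_sub_sq_div_two_le_cos (x := u)
    linarith
  calc arcsin t ≤ arcsin (sin (π / 2 - u)) := monotone_arcsin hsin
    _ = π / 2 - u := arcsin_sin (by linarith) (by linarith)
set_option maxHeartbeats 1000000 in
lemma region3 (t : ℝ) (ht0 : 0 < t) (ht1 : t ≤ 1) (hc2 : 0.9 < t) (h1 : t < 1) :
    4 / (3 * π) * arcsin t ^ 3 / t ≤ ∑' n : ℕ, t ^ (n + 1) / ((n + 1 : ℕ) : ℝ) ^ 2 := by
  have hπl := pi_gt_d6
  have hπu := pi_lt_d6
  have harc0 : 0 ≤ arcsin t := arcsin_nonneg.mpr ht0.le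
  obtain ⟨s, hs_def⟩ : ∃ s : ℝ, s = 1 - t := ⟨_, rfl⟩
  have hs0 : 0 < s := by rw [hs_def]; linarith
  have hs1 : s ≤ 0.1 := by rw [hs_def]; linarith
  obtain ⟨N, hN_def⟩ : ∃ N : ℕ, N = ⌈1 / s⌉₊ := ⟨_, rfl⟩
  have hN1 : 1 ≤ N := by
    rw [hN_def]
    exact Nat.one_le_iff_ne_zero.mpr (by
      simp only [ne_eq, Nat.ceil_eq_zero, not_le]
      positivity)
  have hNpos : (0:ℝ) < (N:ℝ) := by exact_mod_cast hN1
  have hNs : (1:ℝ) / N ≤ s := by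
    have h := Nat.le_ceil (1 / s)
    rw [← hN_def] at h
    rw [div_le_iff₀ hNpos]
    rw [div_le_iff₀ hs0] at h
    nlinarith
  have hNub : (N:ℝ) ≤ 1 / s + 1 := by
    rw [hN_def]; exact (Nat.ceil_lt_add_one (by positivity)).le
  obtain ⟨v, hv_def⟩ : ∃ v : ℝ, v = Real.sqrt s := ⟨_, rfl⟩
  have hv0 : 0 < v := hv_def ▸ Real.sqrt_pos.mpr hs0
  have hvne : v ≠ 0 := ne_of_gt hv0
  have hv2 : v ^ 2 = s := hv_def ▸ Real.sq_sqrt hs0.le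
  have hvub : v ≤ 0.3163 := by nlinarith
  have hlogN : Real.log N ≤ s + 2 / v - 2 := by
    have h1 : Real.log N ≤ Real.log (1 / s + 1) :=
      Real.log_le_log hNpos hNub
    have h2 : Real.log (1 / s + 1) = Real.log (1 + s) - Real.log s := by
      rw [show 1 / s + 1 = (1 + s) / s by field_simp]
      rw [Real.log_div (by positivity) (ne_of_gt hs0)]
    have h3 : Real.log (1 + s) ≤ s := by
      have := Real.log_le_sub_one_of_pos (x := 1 + s) (by linarith)
      linarith
    have h4 : - Real.log s ≤ 2 / v - 2 := by
      have hls : Real.log s = 2 * Real.log v := by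
        rw [hv_def, Real.log_sqrt hs0.le]; ring
      have h5 : Real.log (1 / v) ≤ 1 / v - 1 :=
        Real.log_le_sub_one_of_pos (by positivity)
      rw [one_div, Real.log_inv] at h5
      rw [hls, div_eq_mul_inv]
      linarith
    linarith
  have hdef := deficiency ht0.le ht1 N hN1
  have hd2 : π ^ 2 / 6 - (∑' n : ℕ, t ^ (n + 1) / ((n + 1 : ℕ) : ℝ) ^ 2)
      ≤ 2 * v + s ^ 2 := by
    have hq : s * (2 / v) = 2 * v := by
      rw [← hv2]; field_simp
    have hmul : s * Real.log N ≤ s * (s + 2 / v - 2) :=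
      mul_le_mul_of_nonneg_left hlogN hs0.le
    rw [← hs_def] at hdef
    nlinarith
  -- now bound the RHS
  obtain ⟨u, hu_def⟩ : ∃ u : ℝ, u = Real.sqrt (2 * (1 - t)) := ⟨_, rfl⟩
  have hArc : arcsin t ≤ π / 2 - u := hu_def ▸ arcsin_le_sqrt_bound ht0.le ht1
  obtain ⟨c, hc_def⟩ : ∃ c : ℝ, c = Real.sqrt 2 := ⟨_, rfl⟩
  have hc2 : c ^ 2 = 2 := hc_def ▸ Real.sq_sqrt (by norm_num)
  have hcl : (1.414 : ℝ) ≤ c := by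
    rw [hc_def, Real.le_sqrt (by norm_num) (by norm_num)]; norm_num
  have hcu : c ≤ 1.415 := by nlinarith
  have huv : u = c * v := by
    rw [hu_def, hc_def, hv_def, ← Real.sqrt_mul (by norm_num), ← hs_def]
  have hu0 : 0 ≤ u := hu_def ▸ Real.sqrt_nonneg _
  have hu15 : π / 2 - u ≥ 0 := by
    have : u ≤ 1.415 * 0.3163 := by rw [huv]; nlinarith
    linarith
  -- scalar inequality
  have scalar : 6 + 12 * v + 3 * v ^ 3 + π ^ 2 * v / 2 ≤ 3 * π * c := by
    have hπ2 : π ^ 2 ≤ 9.8697 := by nlinarith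
    nlinarith [mul_nonneg (sub_nonneg.mpr hπ2) hv0.le,
      mul_nonneg (sub_nonneg.mpr hcl) (by linarith : (0:ℝ) ≤ π - 3.141592),
      mul_nonneg (sub_nonneg.mpr hvub) hv0.le, pow_pos hv0 3, pow_pos hv0 2]
  have key2 : 6 * (π * v) + 12 * (π * v ^ 2) + 3 * (π * v ^ 4) + π ^ 3 * v ^ 2 / 2
      ≤ 3 * (π ^ 2 * (c * v)) := by
    have h := mul_le_mul_of_nonneg_left scalar (mul_pos pi_pos hv0).le
    nlinarith [h]
  have key3 : 4 / (3 * π) * (π / 2 - u) ^ 3 / t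
      ≤ π ^ 2 / 6 - (2 * v + s ^ 2) := by
    rw [div_le_iff₀ ht0, div_mul_eq_mul_div, div_le_iff₀ (by positivity)]
    have hts : t = 1 - v ^ 2 := by rw [hv2]; linarith
    rw [huv, hts]
    have hc3v : c ^ 3 * v ^ 3 = 2 * (c * v ^ 3) := by
      have : c ^ 3 = 2 * c := by nlinarith
      rw [this]; ring
    have hc2v : c ^ 2 * v ^ 2 = 2 * v ^ 2 := by rw [hc2]
    have hs_v : s = v ^ 2 := hv2.symm
    rw [hs_v]
    nlinarith [key2, hc3v, hc2v, mul_nonneg (by linarith : (0:ℝ) ≤ c) (pow_pos hv0 3).le,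
      mul_nonneg pi_pos.le (pow_pos hv0 3).le, mul_nonneg pi_pos.le (pow_pos hv0 6).le]
  calc 4 / (3 * π) * arcsin t ^ 3 / t ≤ 4 / (3 * π) * (π / 2 - u) ^ 3 / t := by gcongr
    _ ≤ π ^ 2 / 6 - (2 * v + s ^ 2) := key3
    _ ≤ _ := by linarith



theorem dilog_lower_bound (t : ℝ) (ht0 : 0 < t) (ht1 : t ≤ 1) :
    (∑' n : ℕ, t ^ (n + 1) / ((n + 1 : ℕ) : ℝ) ^ 2) ≥
      (4 / (3 * Real.pi)) * (Real.arcsin t) ^ 3 / t := by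
  have hπl := pi_gt_d6
  have hπu := pi_lt_d6
  have hsum := summable_li2 ht0.le ht1
  have harc0 : 0 ≤ arcsin t := arcsin_nonneg.mpr ht0.le
  have hpart : t + t ^ 2 / 4 ≤ ∑' n : ℕ, t ^ (n + 1) / ((n + 1 : ℕ) : ℝ) ^ 2 := by
    calc t + t ^ 2 / 4
        = ∑ n ∈ Finset.range 2, t ^ (n + 1) / ((n + 1 : ℕ) : ℝ) ^ 2 := by
          rw [Finset.sum_range_succ, Finset.sum_range_one]; norm_num
      _ ≤ _ := Summable.sum_le_tsum (Finset.range 2) (fun n _ => by positivity) hsum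
  rw [ge_iff_le]
  rcases le_or_gt t 0.7 with hc | hc
  · -- region 1 : t ≤ 0.7
    have hA : arcsin t ≤ π / 2 * t := arcsin_le_linear ht0.le ht1
    calc 4 / (3 * π) * arcsin t ^ 3 / t ≤ 4 / (3 * π) * (π / 2 * t) ^ 3 / t := by gcongr
      _ = π ^ 2 / 6 * t ^ 2 := by field_simp; ring
      _ ≤ t + t ^ 2 / 4 := by
          have hπ2 : π ^ 2 ≤ 9.8697 := by nlinarith
          nlinarith [mul_nonneg (sub_nonneg.mpr hπ2) (sq_nonneg t),
            mul_nonneg (sub_nonneg.mpr hc) ht0.le]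
      _ ≤ _ := hpart
  rcases le_or_gt t 0.9 with hc2 | hc2
  · -- region 2 : 0.7 < t ≤ 0.9; split at 0.8
    rcases le_or_gt t 0.8 with hc3 | hc3
    · have hA : arcsin t ≤ 0.939 := by
        have h1 := arcsin_le_sqrt_bound ht0.le ht1
        have h2 : Real.sqrt 0.4 ≤ Real.sqrt (2 * (1 - t)) := Real.sqrt_le_sqrt (by linarith)
        have h3 : (0.632 : ℝ) ≤ Real.sqrt 0.4 := by
          rw [Real.le_sqrt (by norm_num) (by norm_num)]; norm_num
        linarith
      have hA3 : arcsin t ^ 3 ≤ 0.828 := by nlinarith [pow_le_pow_left₀ harc0 hA 3]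
      calc 4 / (3 * π) * arcsin t ^ 3 / t ≤ 4 / (3 * π) * 0.828 / 0.7 := by gcongr <;> linarith
        _ ≤ 0.8225 := by rw [div_le_iff₀ (by norm_num)]; rw [div_mul_eq_mul_div, div_le_iff₀ (by positivity)]; nlinarith
        _ ≤ t + t ^ 2 / 4 := by nlinarith
        _ ≤ _ := hpart
    · have hA : arcsin t ≤ 1.124 := by
        have h1 := arcsin_le_sqrt_bound ht0.le ht1
        have h2 : Real.sqrt 0.2 ≤ Real.sqrt (2 * (1 - t)) := Real.sqrt_le_sqrt (by linarith)
        have h3 : (0.447 : ℝ) ≤ Real.sqrt 0.2 := by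
          rw [Real.le_sqrt (by norm_num) (by norm_num)]; norm_num
        linarith
      have hA3 : arcsin t ^ 3 ≤ 1.421 := by nlinarith [pow_le_pow_left₀ harc0 hA 3]
      calc 4 / (3 * π) * arcsin t ^ 3 / t ≤ 4 / (3 * π) * 1.421 / 0.8 := by gcongr <;> linarith
        _ ≤ 0.96 := by rw [div_le_iff₀ (by norm_num)]; rw [div_mul_eq_mul_div, div_le_iff₀ (by positivity)]; nlinarith
        _ ≤ t + t ^ 2 / 4 := by nlinarith
        _ ≤ _ := hpart
  rcases eq_or_lt_of_le ht1 with h1 | h1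
  · -- t = 1
    subst h1
    have hts : (∑' n : ℕ, (1:ℝ) ^ (n + 1) / ((n + 1 : ℕ) : ℝ) ^ 2) = π ^ 2 / 6 := by
      rw [← basel'.tsum_eq]
      congr 1 with n
      rw [one_pow]
    rw [hts, Real.arcsin_one]
    rw [div_le_iff₀ (by norm_num)]
    rw [div_mul_eq_mul_div, div_le_iff₀ (by positivity)]
    ring_nf
    nlinarith [pi_pos]
  · -- region 3 : 0.9 < t < 1
    exact region3 t ht0 ht1 hc2 h1
end

section
/- For all real t with 0 < t ≤ 1, χ₂(t) ≥ (arcsin t)^2/(2t), where χ₂(t) = ∑_{n=1}^∞ t^(2n-1)/(2n-1)^2. -/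
open Real

private lemma chi_summable {t : ℝ} (h0 : 0 ≤ t) (h1 : t ≤ 1) :
    Summable (fun n : ℕ => t ^ (2 * n + 1) / ((2 * n + 1 : ℕ) : ℝ) ^ 2) := by
  have hbase : Summable (fun n : ℕ => 1 / ((n + 1 : ℕ) : ℝ) ^ 2) :=
    (summable_nat_add_iff (f := fun n : ℕ => 1 / ((n : ℕ) : ℝ) ^ 2) 1).mpr
      (summable_one_div_nat_pow.mpr one_lt_two)
  refine Summable.of_nonneg_of_le (fun n => by positivity) (fun n => ?_) hbase
  have hc1 : ((n + 1 : ℕ) : ℝ) ≤ ((2 * n + 1 : ℕ) : ℝ) := by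
    push_cast; linarith [Nat.cast_nonneg (α := ℝ) n]
  exact div_le_div₀ (by norm_num) (pow_le_one₀ h0 h1) (by positivity)
    (pow_le_pow_left₀ (by positivity) hc1 2)

private lemma chi_summable_one :
    Summable (fun n : ℕ => (1 : ℝ) / ((2 * n + 1 : ℕ) : ℝ) ^ 2) := by
  have := chi_summable (t := 1) zero_le_one le_rfl
  simpa using this

private lemma basel_odd :
    (∑' n : ℕ, (1 : ℝ) / ((2 * n + 1 : ℕ) : ℝ) ^ 2) = π ^ 2 / 8 := by
  have htot : HasSum (fun n : ℕ => (1 : ℝ) / (n : ℝ) ^ 2) (π ^ 2 / 6) := hasSum_zeta_two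
  have hquarter : ∀ k : ℕ, (1 : ℝ) / 4 * (1 / (k : ℝ) ^ 2) = 1 / ((2 * k : ℕ) : ℝ) ^ 2 := by
    intro k
    rcases Nat.eq_zero_or_pos k with rfl | hk
    · norm_num
    · have hk0 : ((k : ℝ)) ≠ 0 := Nat.cast_ne_zero.mpr hk.ne'
      push_cast
      field_simp
      ring
  have heven : HasSum (fun k : ℕ => (1 : ℝ) / ((2 * k : ℕ) : ℝ) ^ 2) (π ^ 2 / 24) := by
    have h := htot.mul_left (1 / 4)
    simp only [hquarter] at h
    rw [show (1:ℝ) / 4 * (π ^ 2 / 6) = π ^ 2 / 24 from by ring] at h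
    exact h
  have key := tsum_even_add_odd (f := fun n : ℕ => (1 : ℝ) / (n : ℝ) ^ 2)
    heven.summable chi_summable_one
  rw [heven.tsum_eq, htot.tsum_eq] at key
  linarith [key]

private lemma one_sub_pow_le_sqrt {t : ℝ} (h0 : 0 ≤ t) (h1 : t ≤ 1) (m : ℕ) :
    1 - t ^ m ≤ Real.sqrt (1 - t) * Real.sqrt (m : ℝ) := by
  have hber : 1 + (m : ℝ) * (t - 1) ≤ t ^ m := by
    have h := one_add_mul_le_pow (a := t - 1) (by linarith) m
    simpa using h
  set s := Real.sqrt (1 - t) with hs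
  set r := Real.sqrt (m : ℝ) with hr
  have hs0 : 0 ≤ s := Real.sqrt_nonneg _
  have hr0 : 0 ≤ r := Real.sqrt_nonneg _
  have hs2 : s ^ 2 = 1 - t := Real.sq_sqrt (by linarith)
  have hr2 : r ^ 2 = (m : ℝ) := Real.sq_sqrt (Nat.cast_nonneg m)
  rcases le_or_gt (s * r) 1 with h | h
  · nlinarith [mul_nonneg hs0 hr0]
  · have hpm : 0 ≤ t ^ m := pow_nonneg h0 m
    nlinarith

private lemma tele_aux {a b : ℝ} (ha : 1 ≤ a) (hb2 : b ^ 2 = a ^ 2 + 2) (hab : a ≤ b) :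
    1 / b ^ 3 ≤ 1 / a - 1 / b := by
  have ha0 : 0 < a := by linarith
  have hb0 : 0 < b := by linarith
  rw [div_sub_div _ _ ha0.ne' hb0.ne', div_le_div_iff₀ (by positivity) (by positivity)]
  -- goal : 1 * (a * b) ≤ (b - a) * b ^ 3
  have h2 : a * b ^ 2 ≤ b ^ 3 := by nlinarith [mul_nonneg (sub_nonneg.mpr hab) (mul_nonneg hb0.le hb0.le)]
  have hW : ((b - a) * b ^ 3 - a * b) * (a + b) = b ^ 3 + 2 * b - a * b ^ 2 := by
    linear_combination (b ^ 3 + b) * hb2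
  rw [show ((1:ℝ) * b - a * 1) = b - a from by ring]
  rcases le_or_gt (1 * (a * b)) ((b - a) * b ^ 3) with h | h
  · exact h
  · exfalso
    have hWneg : (b - a) * b ^ 3 - a * b < 0 := by linarith
    have hneg := mul_neg_of_neg_of_pos hWneg (by linarith : (0:ℝ) < a + b)
    rw [hW] at hneg
    nlinarith [h2, hb0]

private lemma arccos_sq_bounds {t s : ℝ} (h85 : 0.85 ≤ t) (h1 : t ≤ 1)
    (hs0 : 0 ≤ s) (hs2 : s ^ 2 = 1 - t) :
    1.9367 * s ^ 2 ≤ (Real.arccos t) ^ 2 ∧ (Real.arccos t) ^ 2 ≤ 2.0676 * s ^ 2 := by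
  set A := Real.arccos t with hAdef
  have hA0 : 0 ≤ A := Real.arccos_nonneg t
  have hcos : Real.cos A = t := Real.cos_arccos (by linarith) h1
  have hAle : A ≤ 0.56 := by
    by_contra hcon
    push_neg at hcon
    have hApi : A ≤ π := Real.arccos_le_pi t
    have hmono : Real.cos A < Real.cos 0.56 :=
      Real.cos_lt_cos_of_nonneg_of_le_pi (by norm_num) hApi hcon
    have hcb := Real.cos_bound (x := 0.56) (by norm_num [abs_of_nonneg])
    rw [abs_of_nonneg (by norm_num : (0:ℝ) ≤ 0.56)] at hcb
    obtain ⟨hcb1, hcb2⟩ := abs_le.mp hcb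
    nlinarith [hcos]
  have hcbA := Real.cos_bound (x := A) (by rw [abs_of_nonneg hA0]; linarith)
  rw [abs_of_nonneg hA0] at hcbA
  obtain ⟨hcbA1, hcbA2⟩ := abs_le.mp hcbA
  have hA2b : A ^ 2 ≤ 0.3136 := by nlinarith [hAle, hA0]
  have hA4 : A ^ 4 ≤ 0.3136 * A ^ 2 := by nlinarith [sq_nonneg A, hA2b]
  constructor
  · nlinarith [hcos, hs2, hA4, sq_nonneg A]
  · nlinarith [hcos, hs2, hA4, sq_nonneg A]

private lemma near_key {A R s : ℝ} (hA0 : 0 ≤ A) (hA2u : A ^ 2 ≤ 2.0676 * s ^ 2)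
    (hA2l : 1.9367 * s ^ 2 ≤ A ^ 2) (hR0 : 0 ≤ R)
    (hRle : R ≤ s ^ 2 + s ^ 2 / 3 + 0.578 * s) (hs0 : 0 ≤ s) (hsle : s ≤ 0.3873) :
    (π / 2 - A) ^ 2 ≤ (π ^ 2 / 8 - R) * (2 * (1 - s ^ 2)) := by
  have hpil : 3.141592 < π := Real.pi_gt_d6
  have hpiu : π < 3.141593 := Real.pi_lt_d6
  have hpi2 : π ^ 2 ≤ 9.8697 := by nlinarith
  have hss : s ^ 2 ≤ 0.3873 * s := by nlinarith
  have hAs : 1.391 * s ≤ A := by nlinarith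
  have hpiA : 4.369 * s ≤ π * A := by nlinarith
  have hA2u' : A ^ 2 ≤ 0.801 * s := by nlinarith
  have hpis : π ^ 2 * s ^ 2 ≤ 3.824 * s := by nlinarith [sq_nonneg s]
  have hRs : 0 ≤ R * s ^ 2 := mul_nonneg hR0 (sq_nonneg s)
  have hR2 : 2 * R ≤ 2.189 * s := by nlinarith
  nlinarith [hpiA, hA2u', hpis, hRs, hR2, hs0, hR0]

private lemma near_one {t : ℝ} (h85 : 0.85 ≤ t) (h1 : t ≤ 1) :
    (Real.arcsin t) ^ 2 ≤ (∑' n : ℕ, t ^ (2 * n + 1) / ((2 * n + 1 : ℕ) : ℝ) ^ 2) * (2 * t) := by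
  have h0 : (0 : ℝ) ≤ t := by linarith
  have hsumt := chi_summable h0 h1
  set S := ∑' n : ℕ, t ^ (2 * n + 1) / ((2 * n + 1 : ℕ) : ℝ) ^ 2 with hSdef
  set s := Real.sqrt (1 - t) with hsdef
  have hs0 : 0 ≤ s := Real.sqrt_nonneg _
  have hs2 : s ^ 2 = 1 - t := Real.sq_sqrt (by linarith)
  have hsle : s ≤ 0.3873 := by nlinarith
  -- the remainder R
  have hgsub : ∀ n : ℕ, (1 - t ^ (2 * n + 1)) / ((2 * n + 1 : ℕ) : ℝ) ^ 2
      = 1 / ((2 * n + 1 : ℕ) : ℝ) ^ 2 - t ^ (2 * n + 1) / ((2 * n + 1 : ℕ) : ℝ) ^ 2 :=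
    fun n => by ring
  have hgsum : Summable (fun n : ℕ => (1 - t ^ (2 * n + 1)) / ((2 * n + 1 : ℕ) : ℝ) ^ 2) := by
    simp only [hgsub]; exact chi_summable_one.sub hsumt
  set R := ∑' n : ℕ, (1 - t ^ (2 * n + 1)) / ((2 * n + 1 : ℕ) : ℝ) ^ 2 with hRdef
  have hRval : R = π ^ 2 / 8 - S := by
    rw [hRdef]
    simp only [hgsub]
    rw [Summable.tsum_sub chi_summable_one hsumt, basel_odd]
  have hR0 : 0 ≤ R := by
    apply tsum_nonneg
    intro n
    have h1n : t ^ (2 * n + 1) ≤ 1 := pow_le_one₀ h0 h1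
    have hd : (0:ℝ) < ((2 * n + 1 : ℕ) : ℝ) ^ 2 := by positivity
    exact div_nonneg (by linarith) hd.le
  -- bound on R
  have hRle : R ≤ s ^ 2 + s ^ 2 / 3 + s * (1 / Real.sqrt 3) := by
    have hsplit := (Summable.sum_add_tsum_nat_add 2 hgsum).symm
    have htail : (∑' n : ℕ, (1 - t ^ (2 * (n + 2) + 1)) / ((2 * (n + 2) + 1 : ℕ) : ℝ) ^ 2)
        ≤ s * (1 / Real.sqrt 3) := by
      apply Real.tsum_le_of_sum_range_le
      · intro n
        have h1n : t ^ (2 * (n + 2) + 1) ≤ 1 := pow_le_one₀ h0 h1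
        have hd : (0:ℝ) < ((2 * (n + 2) + 1 : ℕ) : ℝ) ^ 2 := by positivity
        exact div_nonneg (by linarith) hd.le
      · intro N
        set F : ℕ → ℝ := fun i => s * (1 / Real.sqrt (2 * (i : ℝ) + 3)) with hF
        have hstep : ∀ i : ℕ, (1 - t ^ (2 * (i + 2) + 1)) / ((2 * (i + 2) + 1 : ℕ) : ℝ) ^ 2
            ≤ F i - F (i + 1) := by
          intro i
          set a := Real.sqrt (2 * (i : ℝ) + 3) with haa
          set b := Real.sqrt (2 * (i : ℝ) + 5) with hbb
          have ha2 : a ^ 2 = 2 * (i : ℝ) + 3 := Real.sq_sqrt (by positivity)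
          have hb2 : b ^ 2 = 2 * (i : ℝ) + 5 := Real.sq_sqrt (by positivity)
          have ha1 : 1 ≤ a := by
            rw [haa]
            rw [show (1:ℝ) = Real.sqrt 1 by simp]
            exact Real.sqrt_le_sqrt (by linarith [Nat.cast_nonneg (α := ℝ) i])
          have hab : a ≤ b := Real.sqrt_le_sqrt (by linarith)
          have hb0 : 0 < b := by linarith
          have hcast : ((2 * (i + 2) + 1 : ℕ) : ℝ) = 2 * (i : ℝ) + 5 := by push_cast; ring
          have hFi : F i - F (i + 1) = s * (1 / a - 1 / b) := by
            rw [hF]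
            simp only []
            rw [haa, hbb]
            push_cast
            ring_nf
          rw [hcast, hFi]
          have h1s : 1 - t ^ (2 * (i + 2) + 1) ≤ s * b := by
            have := one_sub_pow_le_sqrt h0 h1 (2 * (i + 2) + 1)
            rwa [hcast] at this
          have htele := tele_aux ha1 (by rw [ha2, hb2]; ring) hab
          have hb3 : (2 * (i : ℝ) + 5) ^ 2 = b ^ 4 := by rw [← hb2]; ring
          have hnum : 0 ≤ 1 - t ^ (2 * (i + 2) + 1) := by
            have : t ^ (2 * (i + 2) + 1) ≤ 1 := pow_le_one₀ h0 h1
            linarith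
          calc (1 - t ^ (2 * (i + 2) + 1)) / (2 * (i : ℝ) + 5) ^ 2
              ≤ (s * b) / (2 * (i : ℝ) + 5) ^ 2 := by
                gcongr
            _ = s / b ^ 3 := by
                rw [hb3]
                field_simp
            _ ≤ s * (1 / a - 1 / b) := by
                have := mul_le_mul_of_nonneg_left htele hs0
                calc s / b ^ 3 = s * (1 / b ^ 3) := by ring
                  _ ≤ s * (1 / a - 1 / b) := this
        calc ∑ i ∈ Finset.range N, (1 - t ^ (2 * (i + 2) + 1)) / ((2 * (i + 2) + 1 : ℕ) : ℝ) ^ 2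
            ≤ ∑ i ∈ Finset.range N, (F i - F (i + 1)) :=
              Finset.sum_le_sum (fun i _ => hstep i)
          _ = F 0 - F N := Finset.sum_range_sub' F N
          _ ≤ F 0 := by
              have : 0 ≤ F N := by
                apply mul_nonneg hs0
                positivity
              linarith
          _ = s * (1 / Real.sqrt 3) := by
              rw [hF]
              norm_num
    have hg0 : (1 - t ^ (2 * 0 + 1)) / ((2 * 0 + 1 : ℕ) : ℝ) ^ 2 = s ^ 2 := by
      norm_num
      linarith [hs2]
    have hg1 : (1 - t ^ (2 * 1 + 1)) / ((2 * 1 + 1 : ℕ) : ℝ) ^ 2 ≤ s ^ 2 / 3 := by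
      norm_num
      nlinarith [hs2, sq_nonneg (t - 1), h0]
    rw [hRdef, hsplit]
    rw [Finset.sum_range_succ, Finset.sum_range_one]
    linarith [htail, hg1, hg0.le, hg0.ge]
  have hs3 : (1 : ℝ) / Real.sqrt 3 ≤ 0.578 := by
    have h3 : (1.732 : ℝ) ≤ Real.sqrt 3 := (Real.le_sqrt' (by norm_num)).mpr (by norm_num)
    rw [div_le_iff₀ (by linarith)]
    nlinarith
  have hRle' : R ≤ s ^ 2 + s ^ 2 / 3 + 0.578 * s := by
    have : s * (1 / Real.sqrt 3) ≤ s * 0.578 := mul_le_mul_of_nonneg_left hs3 hs0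
    nlinarith [hRle]
  -- arccos analysis
  obtain ⟨hA2l, hA2u⟩ := arccos_sq_bounds h85 h1 hs0 hs2
  have harc : Real.arcsin t = π / 2 - Real.arccos t := by
    have h := Real.arccos_eq_pi_div_two_sub_arcsin t
    linarith [h]
  have hSval : S = π ^ 2 / 8 - R := by linarith [hRval]
  have h2t : 2 * t = 2 * (1 - s ^ 2) := by linarith [hs2]
  rw [harc, hSval, h2t]
  exact near_key (Real.arccos_nonneg t) hA2u hA2l hR0 hRle' hs0 hsle

private lemma arcsin_le_sqrt_two_mul {t : ℝ} (h0 : 0 ≤ t) (h85 : t ≤ 0.85) :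
    Real.arcsin t ≤ Real.sqrt 2 * t := by
  have h2 : (Real.sqrt 2) ^ 2 = 2 := Real.sq_sqrt (by norm_num)
  have h2n : 0 ≤ Real.sqrt 2 := Real.sqrt_nonneg 2
  have h2l : 1.4142 ≤ Real.sqrt 2 := (Real.le_sqrt' (by norm_num)).mpr (by norm_num)
  have h2u : Real.sqrt 2 ≤ 1.41422 := Real.sqrt_le_iff.mpr ⟨by norm_num, by norm_num⟩
  have hpil : 3.141592 < π := Real.pi_gt_d6
  have hpiu : π < 3.141593 := Real.pi_lt_d6
  set u0 : ℝ := Real.sqrt 2 * 0.85 with hu0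
  have hu0l : 1.20207 ≤ u0 := by rw [hu0]; nlinarith
  have hu0u : u0 ≤ 1.2021 := by rw [hu0]; nlinarith
  have hsinu0 : 0.85 ≤ Real.sin u0 := by
    have hy : Real.sin u0 = Real.cos (π / 2 - u0) := (Real.cos_pi_div_two_sub u0).symm
    have hy0 : 0 ≤ π / 2 - u0 := by linarith
    have hyu : π / 2 - u0 ≤ 0.3688 := by linarith
    have hcb := Real.cos_bound (x := π / 2 - u0) (by rw [abs_of_nonneg hy0]; linarith)
    rw [abs_of_nonneg hy0] at hcb
    obtain ⟨hcb1, hcb2⟩ := abs_le.mp hcb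
    have hy2 : (π / 2 - u0) ^ 2 ≤ 0.14 := by nlinarith
    have hy4 : (π / 2 - u0) ^ 4 ≤ 0.14 * (π / 2 - u0) ^ 2 := by
      nlinarith [sq_nonneg (π / 2 - u0), hy2]
    rw [hy]
    nlinarith [hcb1, hy2, hy4]
  have hconc := (strictConcaveOn_sin_Icc).concaveOn
  have hmem0 : (0 : ℝ) ∈ Set.Icc (0 : ℝ) π := Set.mem_Icc.mpr ⟨le_refl 0, Real.pi_pos.le⟩
  have hmemu : u0 ∈ Set.Icc (0 : ℝ) π := Set.mem_Icc.mpr ⟨by linarith, by linarith⟩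
  have ha0 : (0:ℝ) ≤ 1 - t / 0.85 := by
    have : t / 0.85 ≤ 1 := by rw [div_le_one (by norm_num)]; linarith
    linarith
  have hb0 : (0:ℝ) ≤ t / 0.85 := by positivity
  have hsum : (1 - t / 0.85) + t / 0.85 = 1 := by ring
  have hchord := hconc.2 hmem0 hmemu ha0 hb0 hsum
  simp only [smul_eq_mul, Real.sin_zero, mul_zero, zero_add] at hchord
  have harg : t / 0.85 * u0 = Real.sqrt 2 * t := by rw [hu0]; ring
  rw [harg] at hchord
  have hts : t ≤ Real.sin (Real.sqrt 2 * t) := by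
    have hmul : t / 0.85 * 0.85 ≤ t / 0.85 * Real.sin u0 :=
      mul_le_mul_of_nonneg_left hsinu0 hb0
    calc t = t / 0.85 * 0.85 := by ring
      _ ≤ t / 0.85 * Real.sin u0 := hmul
      _ ≤ Real.sin (Real.sqrt 2 * t) := hchord
  have hnn : 0 ≤ Real.sqrt 2 * t := mul_nonneg h2n h0
  have hub : Real.sqrt 2 * t ≤ 1.2021 := by
    nlinarith [mul_nonneg h0 (sub_nonneg.mpr h2u)]
  have hlo : -(π / 2) ≤ Real.sqrt 2 * t := by linarith [Real.pi_pos]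
  have hhi : Real.sqrt 2 * t ≤ π / 2 := by linarith
  have hmono : Real.arcsin t ≤ Real.arcsin (Real.sin (Real.sqrt 2 * t)) :=
    Real.monotone_arcsin hts
  rwa [Real.arcsin_sin hlo hhi] at hmono

theorem chi2_lower_bound (t : ℝ) (ht0 : 0 < t) (ht1 : t ≤ 1) :
    (∑' n : ℕ, t ^ (2 * (n + 1) - 1) / ((2 * (n + 1) - 1 : ℕ) : ℝ) ^ 2) ≥
      (Real.arcsin t) ^ 2 / (2 * t) := by
  have hstep : (∑' n : ℕ, t ^ (2 * (n + 1) - 1) / ((2 * (n + 1) - 1 : ℕ) : ℝ) ^ 2)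
      = ∑' n : ℕ, t ^ (2 * n + 1) / ((2 * n + 1 : ℕ) : ℝ) ^ 2 :=
    tsum_congr fun n => by rw [show 2 * (n + 1) - 1 = 2 * n + 1 from by omega]
  rw [hstep, ge_iff_le, div_le_iff₀ (by positivity)]
  rcases le_or_gt t 0.85 with h | h
  · have hle := arcsin_le_sqrt_two_mul ht0.le h
    have harcnn : 0 ≤ Real.arcsin t := Real.arcsin_nonneg.mpr ht0.le
    have hS : t ≤ ∑' n : ℕ, t ^ (2 * n + 1) / ((2 * n + 1 : ℕ) : ℝ) ^ 2 := by
      have hterm := Summable.le_tsum (chi_summable ht0.le ht1) 0 (fun j _ => by positivity)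
      simpa using hterm
    have h2 : (Real.sqrt 2) ^ 2 = 2 := Real.sq_sqrt (by norm_num)
    have hsq : Real.arcsin t ^ 2 ≤ 2 * t ^ 2 := by
      nlinarith [mul_nonneg (sub_nonneg.mpr hle)
        (add_nonneg harcnn (mul_nonneg (Real.sqrt_nonneg 2) ht0.le))]
    have hmul := mul_le_mul_of_nonneg_right hS (by positivity : (0:ℝ) ≤ 2 * t)
    nlinarith [hsq, hmul]
  · exact near_one h.le ht1
end

section
/- For all real t with |t| ≤ 1, (arcsin t)^3 = ∑_{n=0}^∞ 6·O_n · ((2n-1)!!/(2n)!!) · t^(2n+1)/(2n+1), where O_n = ∑_{k=0}^{n-1} 1/(2k+1)^2. -/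
/-!
With `aₙ = (2n-1)!!/(2n)!!`, the series `∑ aₙ x^(2n)` satisfies `(1 - x²) y' = x y`, so it
is `1 / √(1 - x²)` and its primitive `∑ aₙ x^(2n+1) / (2n+1)` is `arcsin x`. The coefficients
`bₙ = 6 Oₙ aₙ / (2n+1)` satisfy `(2n+2)(2n+3) bₙ₊₁ = (2n+1)² bₙ + 6 aₙ / (2n+1)`, which says
that `F = ∑ bₙ x^(2n+1)` solves `(1 - x²) F'' - x F' = 6 arcsin x`. Hence `√(1 - x²) F'` and
`3 arcsin² x` have the same derivative and agree at `0`, so `F' = (arcsin³)'` and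
`F = arcsin³` on `(-1, 1)`. Since `bₙ ≥ 0` and `F ≤ (π / 2)³` there, `∑ bₙ` converges, so `F`
is continuous on `[-1, 1]` and the identity extends to the endpoints.
-/

open Real Nat Filter Set Topology

noncomputable def doubleFactorialRatio (n : ℕ) : ℝ := ((2 * n - 1)‼ : ℝ) / ((2 * n)‼ : ℝ)

noncomputable def oddInvSqSum (n : ℕ) : ℝ := ∑ k ∈ Finset.range n, 1 / ((2 * k + 1 : ℕ) : ℝ) ^ 2

noncomputable def arcsinCoeff (n : ℕ) : ℝ := doubleFactorialRatio n / (2 * n + 1)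

noncomputable def arcsinCubeCoeff (n : ℕ) : ℝ := 6 * oddInvSqSum n * arcsinCoeff n

lemma doubleFactorialRatio_zero : doubleFactorialRatio 0 = 1 := by
  simp [doubleFactorialRatio]

lemma doubleFactorialRatio_pos (n : ℕ) : 0 < doubleFactorialRatio n := by
  unfold doubleFactorialRatio
  have := doubleFactorial_pos (2 * n - 1)
  have := doubleFactorial_pos (2 * n)
  positivity

lemma succ_mul_doubleFactorialRatio_succ (n : ℕ) :
    2 * ((n + 1 : ℕ) : ℝ) * doubleFactorialRatio (n + 1) =
      (2 * n + 1) * doubleFactorialRatio n := by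
  have hodd : (2 * (n + 1) - 1)‼ = (2 * n + 1) * (2 * n - 1)‼ := by
    rw [show 2 * (n + 1) - 1 = 2 * n + 1 by omega, doubleFactorial_add_one]
  have heven : (2 * (n + 1))‼ = (2 * n + 2) * (2 * n)‼ := by
    rw [show 2 * (n + 1) = 2 * n + 2 by omega, doubleFactorial_add_two]
  simp only [doubleFactorialRatio, hodd, heven]
  push_cast
  field_simp

lemma doubleFactorialRatio_le_one (n : ℕ) : doubleFactorialRatio n ≤ 1 := by
  induction n with
  | zero => simp [doubleFactorialRatio_zero]
  | succ n ih =>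
    have h := succ_mul_doubleFactorialRatio_succ n
    push_cast at h
    nlinarith [doubleFactorialRatio_pos n, doubleFactorialRatio_pos (n + 1)]

lemma oddInvSqSum_nonneg (n : ℕ) : 0 ≤ oddInvSqSum n :=
  Finset.sum_nonneg fun _ _ => by positivity

lemma oddInvSqSum_le (n : ℕ) : oddInvSqSum n ≤ n := by
  have h := Finset.sum_le_card_nsmul (Finset.range n) (fun k => 1 / ((2 * k + 1 : ℕ) : ℝ) ^ 2) 1
    fun k _ => by
      rw [div_le_one (by positivity)]
      exact one_le_pow₀ (by exact_mod_cast Nat.le_add_left 1 (2 * k))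
  simpa [oddInvSqSum] using h

lemma oddInvSqSum_succ (n : ℕ) :
    oddInvSqSum (n + 1) = oddInvSqSum n + 1 / ((2 * n + 1 : ℕ) : ℝ) ^ 2 :=
  Finset.sum_range_succ _ _

lemma arcsinCoeff_nonneg (n : ℕ) : 0 ≤ arcsinCoeff n :=
  div_nonneg (doubleFactorialRatio_pos n).le (by positivity)

lemma two_mul_add_one_mul_arcsinCoeff (n : ℕ) :
    (2 * n + 1) * arcsinCoeff n = doubleFactorialRatio n :=
  mul_div_cancel₀ _ (by positivity)

lemma arcsinCoeff_le_one (n : ℕ) : arcsinCoeff n ≤ 1 :=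
  div_le_one_of_le₀ ((doubleFactorialRatio_le_one n).trans (by linarith [n.cast_nonneg (α := ℝ)]))
    (by positivity)

lemma arcsinCubeCoeff_zero : arcsinCubeCoeff 0 = 0 := by
  simp [arcsinCubeCoeff, oddInvSqSum]

lemma arcsinCubeCoeff_nonneg (n : ℕ) : 0 ≤ arcsinCubeCoeff n :=
  mul_nonneg (mul_nonneg (by norm_num) (oddInvSqSum_nonneg n)) (arcsinCoeff_nonneg n)

lemma arcsinCubeCoeff_le_three (n : ℕ) : arcsinCubeCoeff n ≤ 3 := by
  have h : oddInvSqSum n * doubleFactorialRatio n ≤ n := by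
    nlinarith [oddInvSqSum_le n, oddInvSqSum_nonneg n, doubleFactorialRatio_le_one n,
      doubleFactorialRatio_pos n]
  rw [arcsinCubeCoeff, arcsinCoeff, mul_assoc, ← mul_div_assoc, ← mul_div_assoc,
    div_le_iff₀ (by positivity)]
  linarith

lemma arcsinCubeCoeff_recurrence (n : ℕ) :
    (2 * n + 2) * (2 * n + 3) * arcsinCubeCoeff (n + 1) =
      (2 * n + 1) ^ 2 * arcsinCubeCoeff n + 6 * arcsinCoeff n := by
  have h := succ_mul_doubleFactorialRatio_succ n
  simp only [arcsinCubeCoeff, arcsinCoeff, oddInvSqSum_succ]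
  push_cast at h ⊢
  field_simp
  linear_combination (2 * (n : ℝ) + 3) * (oddInvSqSum n * (2 * n + 1) ^ 2 + 1) * h

def PolyBounded (c : ℕ → ℝ) : Prop := ∃ C : ℝ, ∃ k : ℕ, ∀ n, |c n| ≤ C * ((n : ℝ) + 1) ^ k

lemma summable_succ_pow_mul_geometric (k : ℕ) {r : ℝ} (hr0 : 0 ≤ r) (hr1 : r < 1) :
    Summable (fun n : ℕ => ((n : ℝ) + 1) ^ k * r ^ n) := by
  rcases hr0.eq_or_lt with rfl | hr0
  · exact summable_of_ne_finset_zero (s := {0}) fun n hn => by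
      simp [zero_pow (Finset.notMem_singleton.1 hn)]
  · have h := (summable_nat_add_iff 1).2 (summable_pow_mul_geometric_of_norm_lt_one (R := ℝ) k
      (by rwa [Real.norm_eq_abs, abs_of_pos hr0]))
    refine (h.div_const r).congr fun n => ?_
    push_cast
    field_simp
    ring

namespace PolyBounded

variable {c : ℕ → ℝ}

lemma of_abs_le (C : ℝ) (h : ∀ n, |c n| ≤ C) : PolyBounded c :=
  ⟨C, 0, by simpa using h⟩

lemma nonneg_const {C : ℝ} {k : ℕ} (h : ∀ n, |c n| ≤ C * ((n : ℝ) + 1) ^ k) : 0 ≤ C := by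
  simpa using (abs_nonneg _).trans (h 0)

lemma comp_succ (hc : PolyBounded c) : PolyBounded (fun n => c (n + 1)) := by
  obtain ⟨C, k, h⟩ := hc
  refine ⟨C * 2 ^ k, k, fun n => (h (n + 1)).trans ?_⟩
  have hC := nonneg_const h
  rw [mul_assoc, ← mul_pow]
  push_cast
  gcongr
  linarith [n.cast_nonneg (α := ℝ)]

lemma mul_affine (hc : PolyBounded c) (p q : ℝ) : PolyBounded (fun n => (p * n + q) * c n) := by
  obtain ⟨C, k, h⟩ := hc
  refine ⟨(|p| + |q|) * C, k + 1, fun n => ?_⟩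
  have hn : (0 : ℝ) ≤ n := n.cast_nonneg
  have hpq : |p * n + q| ≤ (|p| + |q|) * ((n : ℝ) + 1) := by
    calc |p * n + q| ≤ |p| * n + |q| := by
          simpa [abs_mul, abs_of_nonneg hn] using abs_add_le (p * n) q
      _ ≤ (|p| + |q|) * ((n : ℝ) + 1) := by nlinarith [abs_nonneg p, abs_nonneg q]
  rw [abs_mul, pow_succ]
  calc |p * n + q| * |c n| ≤ (|p| + |q|) * ((n : ℝ) + 1) * (C * ((n : ℝ) + 1) ^ k) :=
        mul_le_mul hpq (h n) (abs_nonneg _) (by positivity)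
    _ = (|p| + |q|) * C * (((n : ℝ) + 1) ^ k * ((n : ℝ) + 1)) := by ring

lemma const_mul (hc : PolyBounded c) (a : ℝ) : PolyBounded (fun n => a * c n) := by
  simpa using hc.mul_affine 0 a

lemma summable_mul_pow (hc : PolyBounded c) {e : ℕ → ℕ} (he : ∀ n, n ≤ e n) {x : ℝ}
    (hx : |x| < 1) : Summable (fun n => c n * x ^ e n) := by
  obtain ⟨C, k, h⟩ := hc
  refine .of_norm_bounded ((summable_succ_pow_mul_geometric k (abs_nonneg x) hx).mul_left C)
    fun n => ?_
  simp only [norm_mul, norm_pow, Real.norm_eq_abs, ← mul_assoc]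
  exact mul_le_mul (h n) (pow_le_pow_of_le_one (abs_nonneg x) hx.le (he n)) (by positivity)
    (by positivity [nonneg_const h])

lemma hasDerivAt_tsum_mul_pow (hc : PolyBounded c) (j : ℕ) {x : ℝ} (hx : |x| < 1) :
    HasDerivAt (fun y => ∑' n, c n * y ^ (2 * n + j))
      (∑' n, (2 * n + j) * c n * x ^ (2 * n + j - 1)) x := by
  obtain ⟨C, k, h⟩ := hc.mul_affine 2 j
  obtain ⟨r, hxr, hr1⟩ := exists_between hx
  have hr0 : 0 < r := (abs_nonneg x).trans_lt hxr
  refine hasDerivAt_tsum_of_isPreconnected (g := fun n y => c n * y ^ (2 * n + j))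
    (g' := fun n y => (2 * n + j) * c n * y ^ (2 * n + j - 1))
    ((summable_succ_pow_mul_geometric k hr0.le hr1).mul_left C) Metric.isOpen_ball
    (convex_ball 0 r).isPreconnected (fun n y _ => ?_) (fun n y hy => ?_)
    (Metric.mem_ball_self hr0) ?_ (by rwa [mem_ball_zero_iff, Real.norm_eq_abs])
  · simpa [mul_comm, mul_assoc, mul_left_comm] using (hasDerivAt_pow (2 * n + j) y).const_mul (c n)
  · rw [mem_ball_zero_iff, Real.norm_eq_abs] at hy
    rw [norm_mul, norm_pow, Real.norm_eq_abs, Real.norm_eq_abs, ← mul_assoc]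
    refine mul_le_mul (h n) ?_ (by positivity) (by positivity [nonneg_const h])
    exact (pow_le_pow_left₀ (abs_nonneg y) hy.le _).trans
      (pow_le_pow_of_le_one hr0.le hr1.le (by omega))
  · exact summable_of_ne_finset_zero (s := {0}) fun n hn => by
      simp [Finset.notMem_singleton.1 hn]

end PolyBounded

noncomputable def oddSeries (c : ℕ → ℝ) (x : ℝ) : ℝ := ∑' n, c n * x ^ (2 * n + 1)

noncomputable def evenSeries (c : ℕ → ℝ) (x : ℝ) : ℝ := ∑' n, c n * x ^ (2 * n)

lemma oddSeries_zero_right (c : ℕ → ℝ) : oddSeries c 0 = 0 := by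
  simp [oddSeries]

lemma evenSeries_zero_right (c : ℕ → ℝ) : evenSeries c 0 = c 0 := by
  rw [evenSeries, tsum_eq_single 0 fun n hn => by simp [hn]]
  simp

lemma mul_evenSeries (c : ℕ → ℝ) (x : ℝ) : x * evenSeries c x = oddSeries c x := by
  rw [evenSeries, ← tsum_mul_left]
  exact tsum_congr fun n => by ring

section OddEvenSeries

variable {c d : ℕ → ℝ} {x : ℝ}

lemma PolyBounded.summable_oddSeries (hc : PolyBounded c) (hx : |x| < 1) :
    Summable (fun n => c n * x ^ (2 * n + 1)) :=
  hc.summable_mul_pow (fun n => by omega) hx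

lemma oddSeries_add (hc : PolyBounded c) (hd : PolyBounded d) (hx : |x| < 1) :
    oddSeries (fun n => c n + d n) x = oddSeries c x + oddSeries d x := by
  rw [oddSeries, oddSeries, oddSeries, ← (hc.summable_oddSeries hx).tsum_add
    (hd.summable_oddSeries hx)]
  exact tsum_congr fun n => add_mul _ _ _

lemma oddSeries_const_mul (a : ℝ) (c : ℕ → ℝ) (x : ℝ) :
    oddSeries (fun n => a * c n) x = a * oddSeries c x := by
  rw [oddSeries, oddSeries, ← tsum_mul_left]
  exact tsum_congr fun n => mul_assoc _ _ _

lemma hasDerivAt_oddSeries (hc : PolyBounded c) (hx : |x| < 1) :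
    HasDerivAt (oddSeries c) (evenSeries (fun n => (2 * n + 1) * c n) x) x := by
  have h := hc.hasDerivAt_tsum_mul_pow 1 hx
  simp only [Nat.cast_one, Nat.add_sub_cancel] at h
  exact h

-- The coefficient is `d (n + 1)` for `d n = 2 * n * c n`, the shape used by
-- `one_sub_sq_mul_oddSeries_succ`.
lemma hasDerivAt_evenSeries (hc : PolyBounded c) (hx : |x| < 1) :
    HasDerivAt (evenSeries c) (oddSeries (fun n => 2 * (n + 1 : ℕ) * c (n + 1)) x) x := by
  have h := hc.hasDerivAt_tsum_mul_pow 0 hx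
  have hs : Summable fun n => (2 * n + 0) * c n * x ^ (2 * n + 0 - 1) :=
    (hc.mul_affine 2 0).summable_mul_pow (fun n => by omega) hx
  rw [Nat.cast_zero, hs.tsum_eq_zero_add] at h
  have he (n : ℕ) : 2 * (n + 1) - 1 = 2 * n + 1 := by omega
  simp only [Nat.cast_zero, mul_zero, add_zero, zero_mul, zero_add, he] at h
  exact h

lemma one_sub_sq_mul_oddSeries_succ (hd : PolyBounded d) (hd0 : d 0 = 0) (hx : |x| < 1) :
    (1 - x ^ 2) * oddSeries (fun n => d (n + 1)) x = oddSeries (fun n => d (n + 1) - d n) x := by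
  have hs := hd.summable_oddSeries hx
  have hs' := hd.comp_succ.summable_oddSeries hx
  have hshift : oddSeries d x = x ^ 2 * oddSeries (fun n => d (n + 1)) x := by
    rw [oddSeries, hs.tsum_eq_zero_add, hd0, zero_mul, zero_add, oddSeries, ← tsum_mul_left]
    exact tsum_congr fun n => by ring
  rw [sub_mul, one_mul, ← hshift, oddSeries, oddSeries, oddSeries, ← hs'.tsum_sub hs]
  exact tsum_congr fun n => (sub_mul _ _ _).symm

end OddEvenSeries

lemma eqOn_Ioo_of_hasDerivAt {a b x₀ : ℝ} {f g f' : ℝ → ℝ}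
    (hf : ∀ x ∈ Ioo a b, HasDerivAt f (f' x) x) (hg : ∀ x ∈ Ioo a b, HasDerivAt g (f' x) x)
    (hx₀ : x₀ ∈ Ioo a b) (hfg : f x₀ = g x₀) : EqOn f g (Ioo a b) :=
  isOpen_Ioo.eqOn_of_deriv_eq isPreconnected_Ioo
    (fun x hx => (hf x hx).differentiableAt.differentiableWithinAt)
    (fun x hx => (hg x hx).differentiableAt.differentiableWithinAt)
    (fun x hx => (hf x hx).deriv.trans (hg x hx).deriv.symm) hx₀ hfg

lemma one_sub_sq_pos {x : ℝ} (hx : x ∈ Ioo (-1 : ℝ) 1) : 0 < 1 - x ^ 2 := by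
  nlinarith [hx.1, hx.2]

lemma hasDerivAt_sqrt_one_sub_sq {x : ℝ} (hx : x ∈ Ioo (-1 : ℝ) 1) :
    HasDerivAt (fun y => √(1 - y ^ 2)) (-x / √(1 - x ^ 2)) x := by
  convert ((hasDerivAt_pow 2 x).const_sub 1).sqrt (one_sub_sq_pos hx).ne' using 1
  field_simp
  ring

lemma polyBounded_doubleFactorialRatio : PolyBounded doubleFactorialRatio :=
  .of_abs_le 1 fun n => by
    rw [abs_of_pos (doubleFactorialRatio_pos n)]; exact doubleFactorialRatio_le_one n

lemma polyBounded_arcsinCoeff : PolyBounded arcsinCoeff :=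
  .of_abs_le 1 fun n => by rw [abs_of_nonneg (arcsinCoeff_nonneg n)]; exact arcsinCoeff_le_one n

lemma polyBounded_arcsinCubeCoeff : PolyBounded arcsinCubeCoeff :=
  .of_abs_le 3 fun n => by
    rw [abs_of_nonneg (arcsinCubeCoeff_nonneg n)]; exact arcsinCubeCoeff_le_three n

section Interior

variable {x : ℝ}

lemma one_sub_sq_mul_deriv_evenSeries_doubleFactorialRatio (hx : |x| < 1) :
    (1 - x ^ 2) * oddSeries (fun n => 2 * (n + 1 : ℕ) * doubleFactorialRatio (n + 1)) x =
      x * evenSeries doubleFactorialRatio x := by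
  rw [one_sub_sq_mul_oddSeries_succ (d := fun n => 2 * (n : ℝ) * doubleFactorialRatio n)
    (by simpa using polyBounded_doubleFactorialRatio.mul_affine 2 0) (by simp) hx,
    mul_evenSeries]
  congr 1
  funext n
  linear_combination succ_mul_doubleFactorialRatio_succ n

lemma one_sub_sq_mul_deriv2_oddSeries_arcsinCubeCoeff (hx : |x| < 1) :
    (1 - x ^ 2) *
        oddSeries (fun n => 2 * (n + 1 : ℕ) * ((2 * (n + 1 : ℕ) + 1) * arcsinCubeCoeff (n + 1))) x =
      x * evenSeries (fun n => (2 * n + 1) * arcsinCubeCoeff n) x +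
        6 * oddSeries arcsinCoeff x := by
  rw [one_sub_sq_mul_oddSeries_succ (d := fun n => 2 * (n : ℝ) * ((2 * n + 1) * arcsinCubeCoeff n))
    (by simpa using (polyBounded_arcsinCubeCoeff.mul_affine 2 1).mul_affine 2 0) (by simp) hx,
    mul_evenSeries, ← oddSeries_const_mul, ← oddSeries_add
    (polyBounded_arcsinCubeCoeff.mul_affine 2 1) (polyBounded_arcsinCoeff.const_mul 6) hx]
  congr 1
  funext n
  push_cast
  linear_combination arcsinCubeCoeff_recurrence n

lemma evenSeries_doubleFactorialRatio_mul_sqrt (hx : x ∈ Ioo (-1 : ℝ) 1) :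
    evenSeries doubleFactorialRatio x * √(1 - x ^ 2) = 1 := by
  refine eqOn_Ioo_of_hasDerivAt (f := fun y => evenSeries doubleFactorialRatio y * √(1 - y ^ 2))
    (f' := fun _ => 0) (g := fun _ => 1) (fun y hy => ?_)
    (fun y _ => hasDerivAt_const y 1) ⟨neg_one_lt_zero, zero_lt_one⟩
    (by simp [evenSeries_zero_right, doubleFactorialRatio_zero]) hx
  have hode := one_sub_sq_mul_deriv_evenSeries_doubleFactorialRatio (abs_lt.2 hy)
  have hs := sq_sqrt (one_sub_sq_pos hy).le
  have hs0 := (sqrt_pos.2 (one_sub_sq_pos hy)).ne'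
  refine ((hasDerivAt_evenSeries polyBounded_doubleFactorialRatio (abs_lt.2 hy)).mul
    (hasDerivAt_sqrt_one_sub_sq hy)).congr_deriv ?_
  field_simp
  rw [hs]
  linear_combination hode

lemma oddSeries_arcsinCoeff (hx : x ∈ Ioo (-1 : ℝ) 1) : oddSeries arcsinCoeff x = arcsin x := by
  refine eqOn_Ioo_of_hasDerivAt
    (fun y hy => hasDerivAt_oddSeries polyBounded_arcsinCoeff (abs_lt.2 hy))
    (fun y hy => ?_) ⟨neg_one_lt_zero, zero_lt_one⟩ (by simp [oddSeries_zero_right]) hx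
  have h := evenSeries_doubleFactorialRatio_mul_sqrt hy
  have hs0 := (sqrt_pos.2 (one_sub_sq_pos hy)).ne'
  convert hasDerivAt_arcsin hy.1.ne' hy.2.ne using 1
  simp only [two_mul_add_one_mul_arcsinCoeff]
  rwa [eq_div_iff hs0]

lemma sqrt_mul_evenSeries_arcsinCubeCoeff (hx : x ∈ Ioo (-1 : ℝ) 1) :
    √(1 - x ^ 2) * evenSeries (fun n => (2 * n + 1) * arcsinCubeCoeff n) x = 3 * arcsin x ^ 2 := by
  refine eqOn_Ioo_of_hasDerivAt
    (f := fun y => √(1 - y ^ 2) * evenSeries (fun n => (2 * n + 1) * arcsinCubeCoeff n) y)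
    (f' := fun y => 6 * arcsin y / √(1 - y ^ 2)) (g := fun y => 3 * arcsin y ^ 2)
    (fun y hy => ?_) (fun y hy => ?_) ⟨neg_one_lt_zero, zero_lt_one⟩
    (by simp [evenSeries_zero_right, arcsinCubeCoeff_zero]) hx
  · have hode := one_sub_sq_mul_deriv2_oddSeries_arcsinCubeCoeff (abs_lt.2 hy)
    have hs := sq_sqrt (one_sub_sq_pos hy).le
    have hs0 := (sqrt_pos.2 (one_sub_sq_pos hy)).ne'
    rw [oddSeries_arcsinCoeff hy] at hode
    refine ((hasDerivAt_sqrt_one_sub_sq hy).mul (hasDerivAt_evenSeries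
      (polyBounded_arcsinCubeCoeff.mul_affine 2 1) (abs_lt.2 hy))).congr_deriv ?_
    field_simp at hode ⊢
    rw [hs]
    linear_combination hode
  · refine (((hasDerivAt_arcsin hy.1.ne' hy.2.ne).pow 2).const_mul 3).congr_deriv ?_
    field_simp
    ring

lemma oddSeries_arcsinCubeCoeff (hx : x ∈ Ioo (-1 : ℝ) 1) :
    oddSeries arcsinCubeCoeff x = arcsin x ^ 3 := by
  refine eqOn_Ioo_of_hasDerivAt (f := oddSeries arcsinCubeCoeff) (g := fun y => arcsin y ^ 3)
    (f' := fun y => 3 * arcsin y ^ 2 / √(1 - y ^ 2))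
    (fun y hy => ?_) (fun y hy => ?_) ⟨neg_one_lt_zero, zero_lt_one⟩
    (by simp [oddSeries_zero_right]) hx
  · have hs0 := (sqrt_pos.2 (one_sub_sq_pos hy)).ne'
    refine (hasDerivAt_oddSeries polyBounded_arcsinCubeCoeff (abs_lt.2 hy)).congr_deriv ?_
    rw [eq_div_iff hs0, mul_comm]
    exact sqrt_mul_evenSeries_arcsinCubeCoeff hy
  · refine ((hasDerivAt_arcsin hy.1.ne' hy.2.ne).pow 3).congr_deriv ?_
    field_simp
    ring

end Interior

lemma continuousOn_oddSeries {c : ℕ → ℝ} (hc : Summable fun n => |c n|) :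
    ContinuousOn (oddSeries c) (Icc (-1) 1) := by
  refine continuousOn_tsum (fun n => (continuous_const.mul (continuous_pow _)).continuousOn) hc
    fun n x hx => ?_
  rw [norm_mul, norm_pow, Real.norm_eq_abs, Real.norm_eq_abs]
  exact mul_le_of_le_one_right (abs_nonneg _) (pow_le_one₀ (abs_nonneg _) (abs_le.2 hx))

lemma summable_arcsinCubeCoeff : Summable arcsinCubeCoeff := by
  refine summable_of_sum_range_le (c := (π / 2) ^ 3) arcsinCubeCoeff_nonneg fun N => ?_
  set P : ℝ → ℝ := fun t => ∑ n ∈ Finset.range N, arcsinCubeCoeff n * t ^ (2 * n + 1)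
  have hP : ∀ t ∈ Ioo (0 : ℝ) 1, P t ≤ (π / 2) ^ 3 := fun t ht => calc
    P t ≤ oddSeries arcsinCubeCoeff t :=
      (polyBounded_arcsinCubeCoeff.summable_oddSeries
        (by rw [abs_of_pos ht.1]; exact ht.2)).sum_le_tsum _
        fun n _ => mul_nonneg (arcsinCubeCoeff_nonneg n) (pow_nonneg ht.1.le _)
    _ = arcsin t ^ 3 := oddSeries_arcsinCubeCoeff ⟨by linarith [ht.1], ht.2⟩
    _ ≤ (π / 2) ^ 3 :=
      pow_le_pow_left₀ (arcsin_nonneg.2 ht.1.le) (arcsin_le_pi_div_two t) 3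
  have hP_cont : Continuous P :=
    continuous_finsetSum _ fun n _ => continuous_const.mul (continuous_pow _)
  have hlim : Tendsto P (𝓝[<] 1) (𝓝 (P 1)) := hP_cont.continuousAt.continuousWithinAt
  simpa [P] using le_of_tendsto hlim (Filter.mem_of_superset (Ioo_mem_nhdsLT zero_lt_one) hP)

lemma arcsin_pow_three_eq_oddSeries {t : ℝ} (ht : t ∈ Icc (-1 : ℝ) 1) :
    arcsin t ^ 3 = oddSeries arcsinCubeCoeff t := by
  refine EqOn.of_subset_closure (fun x hx => (oddSeries_arcsinCubeCoeff hx).symm)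
    (continuous_arcsin.pow 3).continuousOn (continuousOn_oddSeries ?_) Ioo_subset_Icc_self
    (by rw [closure_Ioo (by norm_num)]) ht
  simpa [abs_of_nonneg (arcsinCubeCoeff_nonneg _)] using summable_arcsinCubeCoeff

theorem arcsin_cube_series (t : ℝ) (ht : |t| ≤ 1) :
    (Real.arcsin t) ^ 3 =
      ∑' n : ℕ, 6 * (∑ k ∈ Finset.range n, 1 / ((2 * k + 1 : ℕ) : ℝ) ^ 2) *
        (((2 * n - 1)‼ : ℝ) / ((2 * n)‼ : ℝ)) * t ^ (2 * n + 1) / (2 * n + 1) := by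
  rw [arcsin_pow_three_eq_oddSeries (abs_le.1 ht), oddSeries]
  refine tsum_congr fun n => ?_
  rw [arcsinCubeCoeff, arcsinCoeff, oddInvSqSum, doubleFactorialRatio]
  ring
end

section
/- ∑_{n=0}^∞ (∑_{k=0}^{n-1} 1/(2k+1)^2) / (2n+1)^2 = π^4/384. -/
/-!
Write `a n = 1 / (2n+1)²`. Squaring the partial sums of `∑ a n` gives
`(∑_{n<N} a n)² = ∑_{n<N} a n² + 2 ∑_{n<N} (∑_{k<n} a k) a n`, so in the limit the Euler sum equals
`((∑ a n)² - ∑ a n²) / 2 = ((π²/8)² - π⁴/96) / 2 = π⁴/384`, where the two odd zeta values come from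
`ζ(2) = π²/6` and `ζ(4) = π⁴/90` by removing the even terms, which contribute `2⁻ᵖ ζ(p)`.
-/

theorem hasSum_one_div_odd_pow {p : ℕ} {s : ℝ} (h : HasSum (fun n : ℕ => 1 / (n : ℝ) ^ p) s) :
    HasSum (fun k : ℕ => 1 / ((2 * k + 1 : ℕ) : ℝ) ^ p) ((1 - 1 / 2 ^ p) * s) := by
  have hinj : Function.Injective (fun k : ℕ => 2 * k + 1) := fun i j hij => by
    simp only at hij
    omega
  obtain ⟨t, hodd⟩ := h.summable.comp_injective hinj
  have heven : HasSum (fun k : ℕ => 1 / ((2 * k : ℕ) : ℝ) ^ p) (1 / 2 ^ p * s) := by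
    have hterm : ∀ k : ℕ, 1 / ((2 * k : ℕ) : ℝ) ^ p = 1 / 2 ^ p * (1 / (k : ℝ) ^ p) := fun k => by
      push_cast
      rw [mul_pow, one_div_mul_one_div]
    simpa only [hterm] using h.mul_left (1 / 2 ^ p)
  have htotal := (HasSum.even_add_odd (f := fun n : ℕ => 1 / (n : ℝ) ^ p) heven hodd).unique h
  rwa [show (1 - 1 / 2 ^ p) * s = t by linear_combination -htotal]

theorem sq_sum_range_eq_sum_sq_add_two_mul_sum {R : Type*} [CommRing R] (a : ℕ → R) (N : ℕ) :
    (∑ n ∈ Finset.range N, a n) ^ 2 =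
      ∑ n ∈ Finset.range N, a n ^ 2 + 2 * ∑ n ∈ Finset.range N, (∑ k ∈ Finset.range n, a k) * a n := by
  induction N with
  | zero => simp
  | succ N ih =>
    simp only [Finset.sum_range_succ]
    linear_combination ih

theorem hasSum_sum_range_mul_of_nonneg {a : ℕ → ℝ} (ha : ∀ n, 0 ≤ a n) {S Q : ℝ}
    (hS : HasSum a S) (hQ : HasSum (fun n => a n ^ 2) Q) :
    HasSum (fun n => (∑ k ∈ Finset.range n, a k) * a n) ((S ^ 2 - Q) / 2) := by
  have hb : ∀ n, 0 ≤ (∑ k ∈ Finset.range n, a k) * a n := fun n =>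
    mul_nonneg (Finset.sum_nonneg fun k _ => ha k) (ha n)
  rw [hasSum_iff_tendsto_nat_of_nonneg hb]
  have hsq := (hS.tendsto_sum_nat.pow 2).sub hQ.tendsto_sum_nat
  refine (hsq.div_const 2).congr fun N => ?_
  rw [sq_sum_range_eq_sum_sq_add_two_mul_sum]
  ring

theorem euler_sum_odd :
    ∑' n : ℕ, (∑ k ∈ Finset.range n, 1 / ((2 * k + 1 : ℕ) : ℝ) ^ 2) / ((2 * n + 1 : ℕ) : ℝ) ^ 2 =
      Real.pi ^ 4 / 384 := by
  have hS := hasSum_one_div_odd_pow hasSum_zeta_two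
  have hQ := hasSum_one_div_odd_pow hasSum_zeta_four
  simp only [show ∀ x : ℝ, 1 / x ^ 4 = (1 / x ^ 2) ^ 2 by intro x; ring] at hQ
  have hsum := hasSum_sum_range_mul_of_nonneg (fun n => by positivity) hS hQ
  simp only [← div_eq_mul_one_div] at hsum
  rw [hsum.tsum_eq]
  ring
end
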